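/- arXiv:1310.5465 — 10 statements merged into one kernel-verified Lean document; each statement's English description precedes it below -/
import Mathlib

section
/- Let σ : ℝ² → ℝ be defined by σ(x,y) = exp((x³+y³)/3), and let P be the symmetric 2-tensor on ℝ² with components P₁₁ = y - x + y⁴/2 - x⁴/2, P₁₂ = P₂₁ = -x²y², P₂₂ = x - y + x⁴/2 - y⁴/2. Then the trace-free part of the Hessian of σ plus P·σ vanishes; explicitly, ∂₁∂₁σ + P₁₁σ = ∂₂∂₂σ + P₂₂σ and ∂₁∂₂σ + P₁₂σ = 0 everywhere on ℝ². -/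
/-- First partial derivative (w.r.t. the first coordinate) of a function on ℝ². -/
noncomputable def pd1 (f : ℝ → ℝ → ℝ) (x y : ℝ) : ℝ := deriv (fun t => f t y) x
/-- Second partial derivative (w.r.t. the second coordinate) of a function on ℝ². -/
noncomputable def pd2 (f : ℝ → ℝ → ℝ) (x y : ℝ) : ℝ := deriv (fun t => f x t) y

/-!
Since `(x³ + y³)/3` splits into a function of `x` plus one of `y`, `σ = φ(x) φ(y)` with
`φ(t) = exp(t³/3)`, and `φ' = t² φ`, `φ'' = (2t + t⁴) φ`. Hence `∂₁∂₁σ + P₁₁σ` and `∂₂∂₂σ + P₂₂σ`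
both equal `(x + y + (x⁴ + y⁴)/2) σ`, while `∂₁∂₂σ = x²y² σ` cancels against `P₁₂σ`.
-/

open Real

section Separable

variable (u v : ℝ → ℝ)

lemma pd1_mul_separable : pd1 (fun x y => u x * v y) = fun x y => deriv u x * v y := by
  funext x y
  exact deriv_mul_const_field (v y)

lemma pd2_mul_separable : pd2 (fun x y => u x * v y) = fun x y => u x * deriv v y := by
  funext x y
  exact deriv_const_mul_field (u x)

end Separable

lemma hasDerivAt_exp_cube_div_three (t : ℝ) :
    HasDerivAt (fun s => exp (s ^ 3 / 3)) (t ^ 2 * exp (t ^ 3 / 3)) t := by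
  have h := ((hasDerivAt_pow 3 t).div_const 3).exp
  convert h using 1
  ring

lemma deriv_exp_cube_div_three :
    deriv (fun s => exp (s ^ 3 / 3)) = fun t => t ^ 2 * exp (t ^ 3 / 3) :=
  funext fun t => (hasDerivAt_exp_cube_div_three t).deriv

lemma deriv_deriv_exp_cube_div_three :
    deriv (deriv fun s => exp (s ^ 3 / 3)) = fun t => (2 * t + t ^ 4) * exp (t ^ 3 / 3) := by
  rw [deriv_exp_cube_div_three]
  funext t
  rw [((hasDerivAt_pow 2 t).fun_mul (hasDerivAt_exp_cube_div_three t)).deriv]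
  ring

/-- σ(x,y) = exp((x³+y³)/3) solves the conformal-to-Einstein equation
for the given Möbius structure P on the flat plane. -/
theorem stmt0
    (σ P11 P12 P22 : ℝ → ℝ → ℝ)
    (hσ : σ = fun x y => Real.exp ((x ^ 3 + y ^ 3) / 3))
    (hP11 : P11 = fun x y => y - x + y ^ 4 / 2 - x ^ 4 / 2)
    (hP12 : P12 = fun x y => -(x ^ 2 * y ^ 2))
    (hP22 : P22 = fun x y => x - y + x ^ 4 / 2 - y ^ 4 / 2) :
    ∀ x y : ℝ,
      pd1 (pd1 σ) x y + P11 x y * σ x y = pd2 (pd2 σ) x y + P22 x y * σ x y ∧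
      pd1 (pd2 σ) x y + P12 x y * σ x y = 0 := by
  have hσ_separable : σ = fun x y => exp (x ^ 3 / 3) * exp (y ^ 3 / 3) := by
    rw [hσ]
    funext x y
    rw [add_div, exp_add]
  subst hσ_separable hP11 hP12 hP22
  intro x y
  simp only [pd1_mul_separable, pd2_mul_separable]
  rw [deriv_deriv_exp_cube_div_three, deriv_exp_cube_div_three]
  constructor <;> ring
end

section
/- Let P be the symmetric tensor on ℝ² with P₁₁ = x²/2 - y²/2, P₁₂ = 0, P₂₂ = y²/2 - x²/2. Then the associated quantities are Y = (2y, -2x) (vector with raised index), U = (-2x, -2y), V = (8y, -8x), so U·V = 0 (the Möbius structure is non-generic), μ = (1/2)∂ₐY^a = 0, f = 4 (defined by V^a = f Y^a), and the obstruction k + fμ = 4xy³ - 4x³y, which is not identically zero; hence this Möbius structure admits no conformal-to-Einstein scale. -/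
lemma deriv_sub_halfsq (a x : ℝ) : deriv (fun t : ℝ => a - t ^ 2 / 2) x = -x := by
  have h : HasDerivAt (fun t : ℝ => a - t ^ 2 / 2) (0 - (2 * x ^ 1 * 1) / 2) x :=
    (hasDerivAt_const x a).sub ((((hasDerivAt_id x).pow 2)).div_const 2)
  simpa using h.deriv

lemma deriv_mul_lin (c x : ℝ) : deriv (fun t : ℝ => c * t) x = c := by
  simpa using ((hasDerivAt_id x).const_mul c).deriv

/-- The key non-existence lemma: there is no nonvanishing smooth `σ` with
`σ_xy = 0` and `σ_xx - σ_yy = (y² - x²) σ`. -/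
lemma no_sigma (σ : ℝ → ℝ → ℝ)
    (hs : ContDiff ℝ (⊤ : ℕ∞) (fun p : ℝ × ℝ => σ p.1 p.2))
    (hne : ∀ x y : ℝ, σ x y ≠ 0)
    (heq1 : ∀ x y : ℝ, pd1 (pd1 σ) x y - pd2 (pd2 σ) x y = (y ^ 2 - x ^ 2) * σ x y)
    (heq2 : ∀ x y : ℝ, pd1 (pd2 σ) x y = 0) : False := by
  set s : ℝ × ℝ → ℝ := fun p => σ p.1 p.2 with hsdef
  have hdiff : Differentiable ℝ s := hs.differentiable (by simp)
  -- partial derivatives as fderiv applications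
  have hD2 : ∀ x y : ℝ, HasDerivAt (fun t => σ x t) (fderiv ℝ s (x, y) (0, 1)) y := by
    intro x y
    have h1 : HasFDerivAt s (fderiv ℝ s (x, y)) (x, y) := (hdiff (x, y)).hasFDerivAt
    have h2 : HasDerivAt (fun t : ℝ => ((x, t) : ℝ × ℝ)) ((0, 1) : ℝ × ℝ) y :=
      (hasDerivAt_const y x).prodMk (hasDerivAt_id y)
    have := h1.comp_hasDerivAt y h2
    simpa [s, Function.comp_def] using this
  have hD1 : ∀ x y : ℝ, HasDerivAt (fun t => σ t y) (fderiv ℝ s (x, y) (1, 0)) x := by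
    intro x y
    have h1 : HasFDerivAt s (fderiv ℝ s (x, y)) (x, y) := (hdiff (x, y)).hasFDerivAt
    have h2 : HasDerivAt (fun t : ℝ => ((t, y) : ℝ × ℝ)) ((1, 0) : ℝ × ℝ) x :=
      (hasDerivAt_id x).prodMk (hasDerivAt_const x y)
    have := h1.comp_hasDerivAt x h2
    simpa [s, Function.comp_def] using this
  have hpd2 : ∀ x y : ℝ, pd2 σ x y = fderiv ℝ s (x, y) (0, 1) := fun x y => (hD2 x y).deriv
  -- pd2 σ is independent of x
  have hD2smooth : ContDiff ℝ (⊤ : ℕ∞) (fun p : ℝ × ℝ => fderiv ℝ s p ((0, 1) : ℝ × ℝ)) :=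
    (hs.fderiv_right (by simp)).clm_apply contDiff_const
  have hconstx : ∀ x y : ℝ, pd2 σ x y = pd2 σ 0 y := by
    intro x y
    have hdf : Differentiable ℝ (fun t : ℝ => fderiv ℝ s (t, y) ((0, 1) : ℝ × ℝ)) :=
      (hD2smooth.differentiable (by simp)).comp (differentiable_id.prodMk (differentiable_const y))
    have hz : ∀ t : ℝ, deriv (fun t : ℝ => fderiv ℝ s (t, y) ((0, 1) : ℝ × ℝ)) t = 0 := by
      intro t
      have h := heq2 t y
      simp only [pd1] at h
      have hfun : (fun u => pd2 σ u y) = fun u : ℝ => fderiv ℝ s (u, y) ((0, 1) : ℝ × ℝ) :=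
        funext fun u => hpd2 u y
      rwa [hfun] at h
    have hc := is_const_of_deriv_eq_zero hdf hz x 0
    rw [hpd2 x y, hpd2 0 y]
    exact hc
  set g : ℝ → ℝ := fun y => pd2 σ 0 y with hgdef
  have hgcont : Continuous g := by
    have hcc : Continuous (fun y : ℝ => fderiv ℝ s (0, y) ((0, 1) : ℝ × ℝ)) :=
      hD2smooth.continuous.comp (continuous_const.prodMk continuous_id)
    have hfun : g = fun y : ℝ => fderiv ℝ s (0, y) ((0, 1) : ℝ × ℝ) := funext fun y => hpd2 0 y
    rwa [hfun]
  set b : ℝ → ℝ := fun y => ∫ t in (0:ℝ)..y, g t with hbdef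
  have hb : ∀ y : ℝ, HasDerivAt b (g y) y := fun y =>
    intervalIntegral.integral_hasDerivAt_right (hgcont.intervalIntegrable 0 y)
      hgcont.aestronglyMeasurable.stronglyMeasurableAtFilter hgcont.continuousAt
  have hb0 : b 0 = 0 := by simp [b]
  -- σ x y = σ x 0 + b y
  have hab : ∀ x y : ℝ, σ x y = σ x 0 + b y := by
    intro x y
    have hfd : Differentiable ℝ (fun t => σ x t - b t) :=
      fun t => ((hD2 x t).differentiableAt).sub (hb t).differentiableAt
    have hz : ∀ t : ℝ, deriv (fun t => σ x t - b t) t = 0 := by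
      intro t
      rw [deriv_fun_sub (hD2 x t).differentiableAt (hb t).differentiableAt]
      have e1 : deriv (fun u => σ x u) t = g t := by
        have h := hconstx x t
        simpa [pd2, g] using h
      rw [e1, (hb t).deriv, sub_self]
    have hc := is_const_of_deriv_eq_zero hfd hz y 0
    rw [hb0] at hc
    linarith
  set a : ℝ → ℝ := fun x => σ x 0 with hadef
  -- pd1 σ in terms of a
  have hpd1a : ∀ x y : ℝ, pd1 σ x y = deriv a x := by
    intro x y
    simp only [pd1]
    have hfun : (fun t => σ t y) = fun t => a t + b y := funext fun t => hab t y
    rw [hfun, deriv_add_const]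
  have hA : ∀ x y : ℝ, pd1 (pd1 σ) x y = deriv (deriv a) x := by
    intro x y
    show deriv (fun t => pd1 σ t y) x = deriv (deriv a) x
    rw [show (fun t => pd1 σ t y) = deriv a from funext fun t => hpd1a t y]
  have hG : ∀ x y : ℝ, pd2 (pd2 σ) x y = deriv g y := by
    intro x y
    show deriv (fun t => pd2 σ x t) y = deriv g y
    rw [show (fun t => pd2 σ x t) = g from funext fun t => hconstx x t]
  -- the functional equation
  have E : ∀ x y : ℝ, deriv (deriv a) x - deriv g y = (y ^ 2 - x ^ 2) * (a x + b y) := by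
    intro x y
    have h := heq1 x y
    rw [hA x y, hG x y, hab x y] at h
    exact h
  -- algebra
  have E1 : ∀ x : ℝ, deriv (deriv a) x = deriv g 0 - x ^ 2 * a x := by
    intro x
    have h := E x 0
    rw [hb0] at h
    nlinarith [h]
  have hA0 : deriv (deriv a) 0 = deriv g 0 := by have := E1 0; simpa using this
  have E2 : ∀ y : ℝ, deriv g y = deriv g 0 - y ^ 2 * (a 0 + b y) := by
    intro y
    have h := E 0 y
    rw [hA0] at h
    nlinarith [h]
  have key : ∀ x y : ℝ, y ^ 2 * a 0 = y ^ 2 * a x - x ^ 2 * b y := by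
    intro x y
    have h := E x y
    rw [E1 x, E2 y] at h
    nlinarith [h]
  have ha : ∀ x : ℝ, a x = a 0 + x ^ 2 * b 1 := by
    intro x
    have h := key x 1
    nlinarith [h]
  have hbv : ∀ y : ℝ, b y = y ^ 2 * b 1 := by
    intro y
    have h := key 1 y
    have h1 := ha 1
    nlinarith [h, h1]
  -- compute deriv (deriv a)
  obtain ⟨c, hc⟩ : ∃ c, a 0 = c := ⟨a 0, rfl⟩
  obtain ⟨d, hd⟩ : ∃ d, b 1 = d := ⟨b 1, rfl⟩
  have haf : a = fun x => c + x ^ 2 * d := funext fun x => by rw [ha x, hc, hd]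
  have hdda : ∀ x : ℝ, deriv (deriv a) x = 2 * d := by
    intro x
    rw [haf]
    have h1 : deriv (fun x : ℝ => c + x ^ 2 * d) = fun x => 2 * x * d := by
      funext t
      have ht : HasDerivAt (fun x : ℝ => c + x ^ 2 * d) (0 + (2 * t ^ 1 * 1) * d) t :=
        (hasDerivAt_const t c).add (((hasDerivAt_id t).pow 2).mul_const d)
      simpa [mul_comm, mul_assoc] using ht.deriv
    rw [h1]
    have ht := ((hasDerivAt_id x).const_mul 2).mul_const d
    simpa using ht.deriv
  -- conclude: for all x, 2d = deriv g 0 - x²(c + x² d)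
  have Efin : ∀ x : ℝ, 2 * d = deriv g 0 - x ^ 2 * (c + x ^ 2 * d) := by
    intro x
    have h := E1 x
    rw [hdda x, ha x, hc, hd] at h
    exact h
  have h1 := Efin 0
  have h2 := Efin 1
  have h3 := Efin 2
  have hd0 : d = 0 := by nlinarith [h1, h2, h3]
  have hc0 : c = 0 := by nlinarith [h1, h2, h3]
  have hzero : σ 0 0 = 0 := by
    have hh := hab 0 0
    rw [hb0] at hh
    have ha0 : a 0 = 0 := by rw [hc, hc0]
    have : σ 0 0 = a 0 := by simpa [a] using hh
    rw [this, ha0]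
  exact hne 0 0 hzero

/-- for the Möbius structure P₁₁ = x²/2 - y²/2, P₁₂ = 0,
P₂₂ = y²/2 - x²/2 on the flat plane, the quantities Y, U, V, μ, f, k compute to
Y = (2y,-2x), U = (-2x,-2y), V = (8y,-8x), U·V = 0 (non-generic), μ = 0, f = 4,
and the obstruction k + fμ = 4xy³ - 4x³y is not identically zero; hence no
conformal-to-Einstein scale exists. -/
theorem stmt4
    (P11 P12 P22 Y1 Y2 U1 U2 V1 V2 μ φ k : ℝ → ℝ → ℝ)
    (hP11 : P11 = fun x y => x ^ 2 / 2 - y ^ 2 / 2)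
    (hP12 : P12 = fun _ _ => 0)
    (hP22 : P22 = fun x y => y ^ 2 / 2 - x ^ 2 / 2)
    (hY1 : ∀ x y, Y1 x y = 2 * (pd1 P12 x y - pd2 P11 x y))
    (hY2 : ∀ x y, Y2 x y = 2 * (pd1 P22 x y - pd2 P12 x y))
    (hU1 : ∀ x y, U1 x y = Y2 x y) (hU2 : ∀ x y, U2 x y = -Y1 x y)
    (hμ : ∀ x y, μ x y = (pd1 Y1 x y + pd2 Y2 x y) / 2)
    (hφ : ∀ x y, φ x y = (pd1 U1 x y + pd2 U2 x y) / 2)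
    (hV1 : ∀ x y, V1 x y = U1 x y * pd1 Y1 x y + U2 x y * pd2 Y1 x y
      + μ x y * U1 x y - 3 * φ x y * Y1 x y)
    (hV2 : ∀ x y, V2 x y = U1 x y * pd1 Y2 x y + U2 x y * pd2 Y2 x y
      + μ x y * U2 x y - 3 * φ x y * Y2 x y)
    (hk : ∀ x y, k x y =
      (P11 x y * U1 x y * Y1 x y + P12 x y * U1 x y * Y2 x y
        + P12 x y * U2 x y * Y1 x y + P22 x y * U2 x y * Y2 x y)
      - (U1 x y * pd1 μ x y + U2 x y * pd2 μ x y) + 3 * φ x y * μ x y) :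
    (∀ x y : ℝ,
      Y1 x y = 2 * y ∧ Y2 x y = -2 * x ∧
      U1 x y = -2 * x ∧ U2 x y = -2 * y ∧
      V1 x y = 8 * y ∧ V2 x y = -8 * x ∧
      U1 x y * V1 x y + U2 x y * V2 x y = 0 ∧
      μ x y = 0 ∧
      V1 x y = 4 * Y1 x y ∧ V2 x y = 4 * Y2 x y ∧
      k x y + 4 * μ x y = 4 * x * y ^ 3 - 4 * x ^ 3 * y) ∧
    (∃ x y : ℝ, k x y + 4 * μ x y ≠ 0) ∧
    ¬ ∃ σ : ℝ → ℝ → ℝ,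
        ContDiff ℝ (⊤ : ℕ∞) (fun p : ℝ × ℝ => σ p.1 p.2) ∧
        (∀ x y : ℝ, σ x y ≠ 0) ∧
        (∀ x y : ℝ,
          pd1 (pd1 σ) x y + P11 x y * σ x y
            = pd2 (pd2 σ) x y + P22 x y * σ x y ∧
          pd1 (pd2 σ) x y + P12 x y * σ x y = 0) := by
  subst hP11 hP12 hP22
  -- explicit formulas
  have eY1 : ∀ x y : ℝ, Y1 x y = 2 * y := by
    intro x y
    rw [hY1 x y]
    simp only [pd1, pd2]
    rw [deriv_const, deriv_sub_halfsq]
    ring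
  have eY2 : ∀ x y : ℝ, Y2 x y = -2 * x := by
    intro x y
    rw [hY2 x y]
    simp only [pd1, pd2]
    rw [deriv_const, deriv_sub_halfsq]
    ring
  have eU1 : ∀ x y : ℝ, U1 x y = -2 * x := fun x y => by rw [hU1 x y, eY2 x y]
  have eU2 : ∀ x y : ℝ, U2 x y = -2 * y := fun x y => by rw [hU2 x y, eY1 x y]; ring
  -- partial derivatives of Y's and U's
  have dY1x : ∀ x y : ℝ, pd1 Y1 x y = 0 := by
    intro x y
    simp only [pd1]
    rw [show (fun t => Y1 t y) = fun _ : ℝ => 2 * y from funext fun t => eY1 t y, deriv_const]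
  have dY1y : ∀ x y : ℝ, pd2 Y1 x y = 2 := by
    intro x y
    simp only [pd2]
    rw [show (fun t => Y1 x t) = fun t : ℝ => 2 * t from funext fun t => eY1 x t, deriv_mul_lin]
  have dY2x : ∀ x y : ℝ, pd1 Y2 x y = -2 := by
    intro x y
    simp only [pd1]
    rw [show (fun t => Y2 t y) = fun t : ℝ => -2 * t from funext fun t => eY2 t y, deriv_mul_lin]
  have dY2y : ∀ x y : ℝ, pd2 Y2 x y = 0 := by
    intro x y
    simp only [pd2]
    rw [show (fun t => Y2 x t) = fun _ : ℝ => -2 * x from funext fun t => eY2 x t, deriv_const]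
  have dU1x : ∀ x y : ℝ, pd1 U1 x y = -2 := by
    intro x y
    simp only [pd1]
    rw [show (fun t => U1 t y) = fun t : ℝ => -2 * t from funext fun t => eU1 t y, deriv_mul_lin]
  have dU2y : ∀ x y : ℝ, pd2 U2 x y = -2 := by
    intro x y
    simp only [pd2]
    rw [show (fun t => U2 x t) = fun t : ℝ => -2 * t from funext fun t => eU2 x t, deriv_mul_lin]
  have eμ : ∀ x y : ℝ, μ x y = 0 := by
    intro x y
    rw [hμ x y, dY1x x y, dY2y x y]
    norm_num
  have eφ : ∀ x y : ℝ, φ x y = -2 := by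
    intro x y
    rw [hφ x y, dU1x x y, dU2y x y]
    norm_num
  have dμx : ∀ x y : ℝ, pd1 μ x y = 0 := by
    intro x y
    simp only [pd1]
    rw [show (fun t => μ t y) = fun _ : ℝ => (0:ℝ) from funext fun t => eμ t y, deriv_const]
  have dμy : ∀ x y : ℝ, pd2 μ x y = 0 := by
    intro x y
    simp only [pd2]
    rw [show (fun t => μ x t) = fun _ : ℝ => (0:ℝ) from funext fun t => eμ x t, deriv_const]
  have eV1 : ∀ x y : ℝ, V1 x y = 8 * y := by
    intro x y
    rw [hV1 x y, eU1 x y, eU2 x y, eμ x y, eφ x y, eY1 x y, dY1x x y, dY1y x y]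
    ring
  have eV2 : ∀ x y : ℝ, V2 x y = -8 * x := by
    intro x y
    rw [hV2 x y, eU1 x y, eU2 x y, eμ x y, eφ x y, eY2 x y, dY2x x y, dY2y x y]
    ring
  have ek : ∀ x y : ℝ, k x y = 4 * x * y ^ 3 - 4 * x ^ 3 * y := by
    intro x y
    rw [hk x y, eU1 x y, eU2 x y, eY1 x y, eY2 x y, eμ x y, eφ x y, dμx x y, dμy x y]
    ring
  refine ⟨fun x y => ⟨eY1 x y, eY2 x y, eU1 x y, eU2 x y, eV1 x y, eV2 x y, ?_, eμ x y, ?_, ?_,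
      ?_⟩, ⟨1, 2, ?_⟩, ?_⟩
  · rw [eU1 x y, eU2 x y, eV1 x y, eV2 x y]; ring
  · rw [eV1 x y, eY1 x y]; ring
  · rw [eV2 x y, eY2 x y]; ring
  · rw [ek x y, eμ x y]; ring
  · rw [ek 1 2, eμ 1 2]; norm_num
  · rintro ⟨σ, hs, hne, heqs⟩
    refine no_sigma σ hs hne (fun x y => ?_) (fun x y => ?_)
    · have h := (heqs x y).1
      nlinarith [h]
    · have h := (heqs x y).2
      simpa using h
end

section
/- Let a > 0 and define σ(x,y) = erf(√(2a)·x)·exp(ax²), where erf(t) = (2/√π)∫₀ᵗ e^{-s²} ds. Then σ satisfies the conformal-to-Einstein equation on ℝ² with P₁₁ = -a - 2a²x², P₁₂ = 0, P₂₂ = 2a²x² + a: namely ∂₁∂₁σ + P₁₁σ = ∂₂∂₂σ + P₂₂σ and ∂₁∂₂σ + P₁₂σ = 0. Moreover σ and exp(ax²) are linearly independent solutions. -/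
/-- The Gaussian error function erf(t) = (2/√π)∫₀ᵗ e^{-s²} ds. -/
noncomputable def erf (t : ℝ) : ℝ :=
  (2 / Real.sqrt Real.pi) * ∫ s in (0:ℝ)..t, Real.exp (-s ^ 2)

/-!
Both σ and τ = e^{ax²} depend on x alone, so every ∂₂-derivative vanishes and the system reduces
to the ODE g'' = (2a + 4a²x²) g. A function g with g' = h + 2ax g, where h' = -2ax h, solves it:
the terms ±2ax h cancel in g''. For τ take h = 0; for σ, since
(erf(√(2a)x))' e^{ax²} = (2/√π) √(2a) e^{-ax²}, take h = (2/√π) √(2a) e^{-ax²}.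
Independence follows from erf 0 = 0 and erf t > 0 for t > 0.
-/

open Real

lemma pd1_fun_fst (g : ℝ → ℝ) : pd1 (fun x _ => g x) = fun x _ => deriv g x := rfl

lemma pd2_fun_fst (g : ℝ → ℝ) : pd2 (fun x _ => g x) = fun _ _ => 0 := by
  funext x y
  exact deriv_const y (g x)

lemma conformalEinstein_of_deriv_deriv {a : ℝ} {g : ℝ → ℝ}
    (hg : ∀ x, deriv (deriv g) x = (2 * a + 4 * a ^ 2 * x ^ 2) * g x) (x y : ℝ) :
    pd1 (pd1 fun x _ => g x) x y + (-a - 2 * a ^ 2 * x ^ 2) * g x =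
        pd2 (pd2 fun x _ => g x) x y + (2 * a ^ 2 * x ^ 2 + a) * g x ∧
      pd1 (pd2 fun x _ => g x) x y + 0 * g x = 0 := by
  simp only [pd1_fun_fst, pd2_fun_fst (fun _ => 0), pd2_fun_fst g, deriv_const', hg]
  constructor <;> ring

lemma deriv_deriv_eq_of_hasDerivAt {a : ℝ} {g h : ℝ → ℝ}
    (hg : ∀ x, HasDerivAt g (h x + 2 * a * x * g x) x)
    (hh : ∀ x, HasDerivAt h (-(2 * a * x * h x)) x) (x : ℝ) :
    deriv (deriv g) x = (2 * a + 4 * a ^ 2 * x ^ 2) * g x := by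
  have hg' : deriv g = fun x => h x + 2 * a * x * g x := funext fun x => (hg x).deriv
  have hlin : HasDerivAt (fun x => 2 * a * x) (2 * a) x := by
    simpa using (hasDerivAt_id x).const_mul (2 * a)
  have hg'' : HasDerivAt (fun x => h x + 2 * a * x * g x)
      (-(2 * a * x * h x) + (2 * a * g x + 2 * a * x * (h x + 2 * a * x * g x))) x :=
    (hh x).add (hlin.mul (hg x))
  rw [hg', hg''.deriv]
  ring

lemma hasDerivAt_exp_mul_sq (a x : ℝ) :
    HasDerivAt (fun x => exp (a * x ^ 2)) (2 * a * x * exp (a * x ^ 2)) x := by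
  convert ((hasDerivAt_pow 2 x).const_mul a).exp using 1
  ring

lemma hasDerivAt_erf (t : ℝ) : HasDerivAt erf (2 / √π * exp (-t ^ 2)) t := by
  have hc : Continuous fun s : ℝ => exp (-s ^ 2) := by fun_prop
  exact (hc.integral_hasStrictDerivAt 0 t).hasDerivAt.const_mul _

lemma erf_zero : erf 0 = 0 := by simp [erf]

lemma erf_pos {t : ℝ} (ht : 0 < t) : 0 < erf t := by
  have hc : Continuous fun s : ℝ => exp (-s ^ 2) := by fun_prop
  have hint : 0 < ∫ s in (0 : ℝ)..t, exp (-s ^ 2) :=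
    intervalIntegral.intervalIntegral_pos_of_pos (hc.intervalIntegrable 0 t)
      (fun s => exp_pos _) ht
  have hsqrt : 0 < √π := sqrt_pos.mpr pi_pos
  unfold erf
  positivity

lemma hasDerivAt_erf_mul_exp {a : ℝ} (ha : 0 ≤ a) (x : ℝ) :
    HasDerivAt (fun x => erf (√(2 * a) * x) * exp (a * x ^ 2))
      (2 / √π * √(2 * a) * exp (-(a * x ^ 2))
        + 2 * a * x * (erf (√(2 * a) * x) * exp (a * x ^ 2))) x := by
  have hs : √(2 * a) ^ 2 = 2 * a := sq_sqrt (by positivity)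
  have hinner : HasDerivAt (fun x => √(2 * a) * x) √(2 * a) x := by
    simpa using (hasDerivAt_id x).const_mul √(2 * a)
  have hgauss : exp (-(√(2 * a) * x) ^ 2) * exp (a * x ^ 2) = exp (-(a * x ^ 2)) := by
    rw [← exp_add, mul_pow, hs]
    ring_nf
  refine (((hasDerivAt_erf _).comp x hinner).mul (hasDerivAt_exp_mul_sq a x)).congr_deriv ?_
  rw [← hgauss, Function.comp_apply]
  ring

lemma erf_mul_exp_deriv_deriv {a : ℝ} (ha : 0 ≤ a) (x : ℝ) :
    deriv (deriv fun x => erf (√(2 * a) * x) * exp (a * x ^ 2)) x =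
      (2 * a + 4 * a ^ 2 * x ^ 2) * (erf (√(2 * a) * x) * exp (a * x ^ 2)) := by
  refine deriv_deriv_eq_of_hasDerivAt (hasDerivAt_erf_mul_exp ha) (fun x => ?_) x
  have h := (hasDerivAt_exp_mul_sq (-a) x).const_mul (2 / √π * √(2 * a))
  simp only [neg_mul] at h
  exact h.congr_deriv (by ring)

lemma exp_mul_sq_deriv_deriv (a x : ℝ) :
    deriv (deriv fun x => exp (a * x ^ 2)) x = (2 * a + 4 * a ^ 2 * x ^ 2) * exp (a * x ^ 2) :=
  deriv_deriv_eq_of_hasDerivAt (h := fun _ => 0)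
    (fun x => by simpa using hasDerivAt_exp_mul_sq a x) (fun x => by simpa using hasDerivAt_const x 0) x

lemma linearIndependent_erf_mul_exp_exp {a : ℝ} (ha : 0 < a) {c1 c2 : ℝ}
    (h : ∀ x, c1 * (erf (√(2 * a) * x) * exp (a * x ^ 2)) + c2 * exp (a * x ^ 2) = 0) :
    c1 = 0 ∧ c2 = 0 := by
  have hc2 : c2 = 0 := by simpa [erf_zero] using h 0
  subst hc2
  have hpos : 0 < erf (√(2 * a) * 1) * exp (a * 1 ^ 2) :=
    mul_pos (erf_pos (by simpa using sqrt_pos.mpr (by positivity : 0 < 2 * a))) (exp_pos _)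
  have h1 := h 1
  rw [zero_mul, add_zero] at h1
  exact ⟨(mul_eq_zero.mp h1).resolve_right hpos.ne', rfl⟩

/-- σ(x,y) = erf(√(2a)x)·e^{ax²} solves the conformal-to-Einstein
equation on ℝ² for P₁₁ = -a - 2a²x², P₁₂ = 0, P₂₂ = 2a²x² + a, and σ and
(x,y) ↦ e^{ax²} are linearly independent solutions. -/
theorem stmt6
    (a : ℝ) (ha : 0 < a)
    (σ τ P11 P12 P22 : ℝ → ℝ → ℝ)
    (hσ : σ = fun x _ => erf (Real.sqrt (2 * a) * x) * Real.exp (a * x ^ 2))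
    (hτ : τ = fun x _ => Real.exp (a * x ^ 2))
    (hP11 : P11 = fun x _ => -a - 2 * a ^ 2 * x ^ 2)
    (hP12 : P12 = fun _ _ => 0)
    (hP22 : P22 = fun x _ => 2 * a ^ 2 * x ^ 2 + a) :
    (∀ x y : ℝ,
      pd1 (pd1 σ) x y + P11 x y * σ x y = pd2 (pd2 σ) x y + P22 x y * σ x y ∧
      pd1 (pd2 σ) x y + P12 x y * σ x y = 0) ∧
    (∀ x y : ℝ,
      pd1 (pd1 τ) x y + P11 x y * τ x y = pd2 (pd2 τ) x y + P22 x y * τ x y ∧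
      pd1 (pd2 τ) x y + P12 x y * τ x y = 0) ∧
    (∀ c1 c2 : ℝ, (∀ x y : ℝ, c1 * σ x y + c2 * τ x y = 0) → c1 = 0 ∧ c2 = 0) := by
  subst hσ hτ hP11 hP12 hP22
  exact ⟨conformalEinstein_of_deriv_deriv (erf_mul_exp_deriv_deriv ha.le),
    conformalEinstein_of_deriv_deriv (exp_mul_sq_deriv_deriv a),
    fun c1 c2 h => linearIndependent_erf_mul_exp_exp ha fun x => h x 0⟩
end

section
/- Let P be the symmetric tensor on ℝ² with P₁₁ = -x/2, P₁₂ = 0, P₂₂ = x/2. Then for this Möbius structure: Y = dy (i.e. Y₁ = 0, Y₂ = 1 with lowered index), U = dx, ρ = YₐY^a = 1, μ = 0, φ = 0, V = 0, and the second-order ODE (with η = x) to which the conformal-to-Einstein equation reduces is ξ'' - xξ = 0 (Airy's equation). -/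
/-- for the Möbius structure P₁₁ = -x/2, P₁₂ = 0, P₂₂ = x/2 one has
Y = dy, U = dx, ρ = 1, μ = 0, φ = 0, V = 0, f = 0, Q̃ = x/2, R̃ = -x/2, and the
reduced second-order ODE is ξ'' - xξ = 0 (Airy's equation). -/
theorem stmt7
    (P11 P12 P22 Y1 Y2 U1 U2 V1 V2 μ φ ρ f Q R : ℝ → ℝ → ℝ)
    (hP11 : P11 = fun x _ => -x / 2)
    (hP12 : P12 = fun _ _ => 0)
    (hP22 : P22 = fun x _ => x / 2)
    (hY1 : ∀ x y, Y1 x y = 2 * (pd1 P12 x y - pd2 P11 x y))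
    (hY2 : ∀ x y, Y2 x y = 2 * (pd1 P22 x y - pd2 P12 x y))
    (hU1 : ∀ x y, U1 x y = Y2 x y) (hU2 : ∀ x y, U2 x y = -Y1 x y)
    (hρ : ∀ x y, ρ x y = Y1 x y ^ 2 + Y2 x y ^ 2)
    (hμ : ∀ x y, μ x y = (pd1 Y1 x y + pd2 Y2 x y) / 2)
    (hφ : ∀ x y, φ x y = (pd1 U1 x y + pd2 U2 x y) / 2)
    (hV1 : ∀ x y, V1 x y = U1 x y * pd1 Y1 x y + U2 x y * pd2 Y1 x y
      + μ x y * U1 x y - 3 * φ x y * Y1 x y)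
    (hV2 : ∀ x y, V2 x y = U1 x y * pd1 Y2 x y + U2 x y * pd2 Y2 x y
      + μ x y * U2 x y - 3 * φ x y * Y2 x y)
    (hf : ∀ x y, V1 x y = f x y * Y1 x y ∧ V2 x y = f x y * Y2 x y)
    (hQ : ∀ x y, Q x y =
      (P11 x y * Y1 x y * Y1 x y + 2 * P12 x y * Y1 x y * Y2 x y
        + P22 x y * Y2 x y * Y2 x y)
      - (Y1 x y * Y1 x y * pd1 (pd1 ρ) x y + Y1 x y * Y2 x y * pd2 (pd1 ρ) x y
        + Y2 x y * Y1 x y * pd1 (pd2 ρ) x y + Y2 x y * Y2 x y * pd2 (pd2 ρ) x y)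
          / (6 * ρ x y)
      + 7 * (Y1 x y * pd1 ρ x y + Y2 x y * pd2 ρ x y) ^ 2 / (36 * ρ x y ^ 2))
    (hR : ∀ x y, R x y =
      (P11 x y * U1 x y * U1 x y + 2 * P12 x y * U1 x y * U2 x y
        + P22 x y * U2 x y * U2 x y)
      - (U1 x y * U1 x y * pd1 (pd1 ρ) x y + U1 x y * U2 x y * pd2 (pd1 ρ) x y
        + U2 x y * U1 x y * pd1 (pd2 ρ) x y + U2 x y * U2 x y * pd2 (pd2 ρ) x y)
          / (6 * ρ x y)
      + 7 * (U1 x y * pd1 ρ x y + U2 x y * pd2 ρ x y) ^ 2 / (36 * ρ x y ^ 2)) :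
    ∀ x y : ℝ,
      Y1 x y = 0 ∧ Y2 x y = 1 ∧ U1 x y = 1 ∧ U2 x y = 0 ∧
      ρ x y = 1 ∧ μ x y = 0 ∧ φ x y = 0 ∧ V1 x y = 0 ∧ V2 x y = 0 ∧ f x y = 0 ∧
      Q x y = x / 2 ∧ R x y = -x / 2 ∧
      (∀ ξ : ℝ → ℝ,
        deriv (deriv ξ) x + (2 * f x y / 3) * ρ x y ^ (-(2:ℝ)/3) * deriv ξ x
          + (R x y - Q x y) * ρ x y ^ (-(4:ℝ)/3) * ξ x
        = deriv (deriv ξ) x - x * ξ x) := by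
  have hY1' : ∀ x y, Y1 x y = 0 := by
    intro x y
    simp [hY1, pd1, pd2, hP12, hP11]
  have hY2' : ∀ x y, Y2 x y = 1 := by
    intro x y
    have : deriv (fun t : ℝ => t / 2) x = 1 / 2 := by
      simp [deriv_div_const]
    simp [hY2, pd1, pd2, hP22, hP12, this]
  have hU1' : ∀ x y, U1 x y = 1 := by intro x y; rw [hU1, hY2']
  have hU2' : ∀ x y, U2 x y = 0 := by intro x y; rw [hU2, hY1']; simp
  have hρ' : ∀ x y, ρ x y = 1 := by intro x y; rw [hρ, hY1', hY2']; ring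
  have pd1const : ∀ (g : ℝ → ℝ → ℝ) (c : ℝ), (∀ x y, g x y = c) → ∀ x y, pd1 g x y = 0 := by
    intro g c hg x y
    have : (fun t => g t y) = fun _ => c := funext fun t => hg t y
    rw [pd1, this]; simp
  have pd2const : ∀ (g : ℝ → ℝ → ℝ) (c : ℝ), (∀ x y, g x y = c) → ∀ x y, pd2 g x y = 0 := by
    intro g c hg x y
    have : (fun t => g x t) = fun _ => c := funext fun t => hg x t
    rw [pd2, this]; simp
  have hμ' : ∀ x y, μ x y = 0 := by
    intro x y
    rw [hμ, pd1const Y1 0 hY1', pd2const Y2 1 hY2']; ring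
  have hφ' : ∀ x y, φ x y = 0 := by
    intro x y
    rw [hφ, pd1const U1 1 hU1', pd2const U2 0 hU2']; ring
  have hV1' : ∀ x y, V1 x y = 0 := by
    intro x y
    rw [hV1, pd1const Y1 0 hY1', pd2const Y1 0 hY1', hμ', hφ']; ring
  have hV2' : ∀ x y, V2 x y = 0 := by
    intro x y
    rw [hV2, pd1const Y2 1 hY2', pd2const Y2 1 hY2', hμ', hφ']; ring
  have hf' : ∀ x y, f x y = 0 := by
    intro x y
    have := (hf x y).2
    rw [hV2', hY2'] at this
    linarith
  have hpd1ρ : ∀ x y, pd1 ρ x y = 0 := pd1const ρ 1 hρ'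
  have hpd2ρ : ∀ x y, pd2 ρ x y = 0 := pd2const ρ 1 hρ'
  have hQ' : ∀ x y, Q x y = x / 2 := by
    intro x y
    rw [hQ, pd1const (pd1 ρ) 0 hpd1ρ, pd2const (pd1 ρ) 0 hpd1ρ,
      pd1const (pd2 ρ) 0 hpd2ρ, pd2const (pd2 ρ) 0 hpd2ρ,
      hY1', hY2', hρ', hpd1ρ, hpd2ρ, hP11, hP12, hP22]
    norm_num
  have hR' : ∀ x y, R x y = -x / 2 := by
    intro x y
    rw [hR, pd1const (pd1 ρ) 0 hpd1ρ, pd2const (pd1 ρ) 0 hpd1ρ,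
      pd1const (pd2 ρ) 0 hpd2ρ, pd2const (pd2 ρ) 0 hpd2ρ,
      hU1', hU2', hρ', hpd1ρ, hpd2ρ, hP11, hP12, hP22]
    norm_num
  intro x y
  refine ⟨hY1' x y, hY2' x y, hU1' x y, hU2' x y, hρ' x y, hμ' x y, hφ' x y,
    hV1' x y, hV2' x y, hf' x y, hQ' x y, hR' x y, ?_⟩
  intro ξ
  rw [hf', hρ', hQ', hR']
  simp [Real.one_rpow]
  ring
end

section
/- Let Y : ℝ² → ℝ² be a smooth vector field with associated U_a = ε_{ac}Y^c, ρ = YₐY^a nowhere vanishing, μ = (1/2)∂ₐY^a, φ = (1/2)∂ₐU^a, and V_d = U^e∂_eY_d + μU_d - 3φY_d. If U^aVₐ = 0 everywhere, then Y^a∂ₐρ = 6μρ everywhere. -/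
lemma slice1_diff {f : ℝ → ℝ → ℝ} (hf : ContDiff ℝ (⊤ : ℕ∞) (fun p : ℝ × ℝ => f p.1 p.2))
    (x y : ℝ) : DifferentiableAt ℝ (fun t => f t y) x := by
  have := DifferentiableAt.comp (𝕜 := ℝ) (g := fun p : ℝ × ℝ => f p.1 p.2) x
    (hf.differentiable (by simp) (x, y)) ((differentiableAt_id (x := x)).prodMk (differentiableAt_const y))
  exact this

lemma slice2_diff {f : ℝ → ℝ → ℝ} (hf : ContDiff ℝ (⊤ : ℕ∞) (fun p : ℝ × ℝ => f p.1 p.2))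
    (x y : ℝ) : DifferentiableAt ℝ (fun t => f x t) y := by
  have := DifferentiableAt.comp (g := fun p : ℝ × ℝ => f p.1 p.2) y
    (hf.differentiable (by simp) (x, y)) ((differentiableAt_const x).prodMk differentiableAt_id)
  exact this

/-- for a smooth vector field Y on ℝ² with U_a = ε_{ac}Y^c,
ρ = Y·Y nowhere zero, μ = ½∂ₐY^a, φ = ½∂ₐU^a, V_d = U^e∂_eY_d + μU_d - 3φY_d:
if U·V = 0 everywhere then Y^a∂ₐρ = 6μρ everywhere. -/
theorem stmt8
    (Y1 Y2 U1 U2 V1 V2 μ φ ρ : ℝ → ℝ → ℝ)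
    (hY1sm : ContDiff ℝ (⊤ : ℕ∞) (fun p : ℝ × ℝ => Y1 p.1 p.2))
    (hY2sm : ContDiff ℝ (⊤ : ℕ∞) (fun p : ℝ × ℝ => Y2 p.1 p.2))
    (hU1 : ∀ x y, U1 x y = Y2 x y) (hU2 : ∀ x y, U2 x y = -Y1 x y)
    (hρ : ∀ x y, ρ x y = Y1 x y ^ 2 + Y2 x y ^ 2)
    (hρ0 : ∀ x y, ρ x y ≠ 0)
    (hμ : ∀ x y, μ x y = (pd1 Y1 x y + pd2 Y2 x y) / 2)
    (hφ : ∀ x y, φ x y = (pd1 U1 x y + pd2 U2 x y) / 2)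
    (hV1 : ∀ x y, V1 x y = U1 x y * pd1 Y1 x y + U2 x y * pd2 Y1 x y
      + μ x y * U1 x y - 3 * φ x y * Y1 x y)
    (hV2 : ∀ x y, V2 x y = U1 x y * pd1 Y2 x y + U2 x y * pd2 Y2 x y
      + μ x y * U2 x y - 3 * φ x y * Y2 x y)
    (hUV : ∀ x y, U1 x y * V1 x y + U2 x y * V2 x y = 0) :
    ∀ x y : ℝ, Y1 x y * pd1 ρ x y + Y2 x y * pd2 ρ x y = 6 * μ x y * ρ x y := by
  intro x y
  have h1 : DifferentiableAt ℝ (fun t => Y1 t y) x := slice1_diff hY1sm x y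
  have h2 : DifferentiableAt ℝ (fun t => Y2 t y) x := slice1_diff hY2sm x y
  have h3 : DifferentiableAt ℝ (fun t => Y1 x t) y := slice2_diff hY1sm x y
  have h4 : DifferentiableAt ℝ (fun t => Y2 x t) y := slice2_diff hY2sm x y
  have hd1 : (fun t => ρ t y) = fun t => Y1 t y ^ 2 + Y2 t y ^ 2 := funext fun t => hρ t y
  have hd2 : (fun t => ρ x t) = fun t => Y1 x t ^ 2 + Y2 x t ^ 2 := funext fun t => hρ x t
  have hpd1 : pd1 ρ x y = 2 * Y1 x y * pd1 Y1 x y + 2 * Y2 x y * pd1 Y2 x y := by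
    have : deriv (fun t => Y1 t y ^ 2 + Y2 t y ^ 2) x = _ := ((h1.hasDerivAt.pow 2).add (h2.hasDerivAt.pow 2)).deriv
    simp only [pd1, hd1, this]
    ring
  have hpd2 : pd2 ρ x y = 2 * Y1 x y * pd2 Y1 x y + 2 * Y2 x y * pd2 Y2 x y := by
    have : deriv (fun t => Y1 x t ^ 2 + Y2 x t ^ 2) y = _ := ((h3.hasDerivAt.pow 2).add (h4.hasDerivAt.pow 2)).deriv
    simp only [pd2, hd2, this]
    ring
  have kUV := hUV x y
  rw [hV1 x y, hV2 x y, hU1 x y, hU2 x y] at kUV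
  rw [hμ x y, hρ x y, hpd1, hpd2]
  rw [hμ x y] at kUV
  have hpU1 : pd1 U1 x y = pd1 Y2 x y := by
    simp only [pd1]; congr 1; exact funext fun t => hU1 t y
  have hpU2 : pd2 U2 x y = -pd2 Y1 x y := by
    simp only [pd2]
    have : (fun t => U2 x t) = fun t => -Y1 x t := funext fun t => hU2 x t
    rw [this]
    exact deriv.neg
  rw [hφ x y, hpU1, hpU2] at kUV
  nlinarith [kUV]
end

section
/- Under the hypotheses of the previous identity (U^aVₐ = 0, ρ nowhere zero), the 1-form ω_a = ρ^{-1/3}U_a is closed: ε^{ab}∂ₐω_b = 0. -/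
lemma hasDeriv_pd1 {f : ℝ → ℝ → ℝ} (hf : ContDiff ℝ (⊤ : ℕ∞) (fun p : ℝ × ℝ => f p.1 p.2))
    (x y : ℝ) : HasDerivAt (fun t => f t y) (pd1 f x y) x := by
  have h : DifferentiableAt ℝ (fun t => f t y) x := by
    have h1 : (fun t : ℝ => f t y) = (fun p : ℝ × ℝ => f p.1 p.2) ∘ (fun t => (t, y)) := rfl
    rw [h1]
    exact DifferentiableAt.comp x (hf.differentiable (by simp) _)
      (differentiableAt_id.prodMk (differentiableAt_const y))
  exact h.hasDerivAt

lemma hasDeriv_pd2 {f : ℝ → ℝ → ℝ} (hf : ContDiff ℝ (⊤ : ℕ∞) (fun p : ℝ × ℝ => f p.1 p.2))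
    (x y : ℝ) : HasDerivAt (fun t => f x t) (pd2 f x y) y := by
  have h : DifferentiableAt ℝ (fun t => f x t) y := by
    have h1 : (fun t : ℝ => f x t) = (fun p : ℝ × ℝ => f p.1 p.2) ∘ (fun t => (x, t)) := rfl
    rw [h1]
    exact DifferentiableAt.comp y (hf.differentiable (by simp) _)
      ((differentiableAt_const x).prodMk differentiableAt_id)
  exact h.hasDerivAt

/-- under the non-generic hypotheses (U·V = 0, ρ > 0), the 1-form
ω_a = ρ^{-1/3}U_a is closed: ε^{ab}∂ₐω_b = ∂₁ω₂ - ∂₂ω₁ = 0. -/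
theorem stmt9
    (Y1 Y2 U1 U2 V1 V2 μ φ ρ ω1 ω2 : ℝ → ℝ → ℝ)
    (hY1sm : ContDiff ℝ (⊤ : ℕ∞) (fun p : ℝ × ℝ => Y1 p.1 p.2))
    (hY2sm : ContDiff ℝ (⊤ : ℕ∞) (fun p : ℝ × ℝ => Y2 p.1 p.2))
    (hU1 : ∀ x y, U1 x y = Y2 x y) (hU2 : ∀ x y, U2 x y = -Y1 x y)
    (hρ : ∀ x y, ρ x y = Y1 x y ^ 2 + Y2 x y ^ 2)
    (hρ0 : ∀ x y, 0 < ρ x y)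
    (hμ : ∀ x y, μ x y = (pd1 Y1 x y + pd2 Y2 x y) / 2)
    (hφ : ∀ x y, φ x y = (pd1 U1 x y + pd2 U2 x y) / 2)
    (hV1 : ∀ x y, V1 x y = U1 x y * pd1 Y1 x y + U2 x y * pd2 Y1 x y
      + μ x y * U1 x y - 3 * φ x y * Y1 x y)
    (hV2 : ∀ x y, V2 x y = U1 x y * pd1 Y2 x y + U2 x y * pd2 Y2 x y
      + μ x y * U2 x y - 3 * φ x y * Y2 x y)
    (hUV : ∀ x y, U1 x y * V1 x y + U2 x y * V2 x y = 0)
    (hω1 : ∀ x y, ω1 x y = ρ x y ^ (-(1:ℝ)/3) * U1 x y)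
    (hω2 : ∀ x y, ω2 x y = ρ x y ^ (-(1:ℝ)/3) * U2 x y) :
    ∀ x y : ℝ, pd1 ω2 x y - pd2 ω1 x y = 0 := by
  intro x y
  set a := Y1 x y with ha
  set b := Y2 x y with hb
  set p := pd1 Y1 x y with hp
  set q := pd1 Y2 x y with hq
  set u := pd2 Y1 x y with hu
  set v := pd2 Y2 x y with hv
  have hr0 : ρ x y ≠ 0 := (hρ0 x y).ne'
  -- derivatives of Y in each direction
  have hY1d1 := hasDeriv_pd1 hY1sm x y
  have hY2d1 := hasDeriv_pd1 hY2sm x y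
  have hY1d2 := hasDeriv_pd2 hY1sm x y
  have hY2d2 := hasDeriv_pd2 hY2sm x y
  -- derivatives of ρ
  have hρd1 : HasDerivAt (fun t => ρ t y) (2*a*p + 2*b*q) x := by
    have hfun : (fun t => ρ t y) = fun t => Y1 t y ^ 2 + Y2 t y ^ 2 :=
      funext fun t => hρ t y
    rw [hfun]
    have h := (hY1d1.fun_pow 2).fun_add (hY2d1.fun_pow 2)
    refine h.congr_deriv ?_
    push_cast; ring
  have hρd2 : HasDerivAt (fun t => ρ x t) (2*a*u + 2*b*v) y := by
    have hfun : (fun t => ρ x t) = fun t => Y1 x t ^ 2 + Y2 x t ^ 2 :=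
      funext fun t => hρ x t
    rw [hfun]
    have h := (hY1d2.fun_pow 2).fun_add (hY2d2.fun_pow 2)
    refine h.congr_deriv ?_
    push_cast; ring
  -- derivative of ω2 in direction 1
  have hrpow1 : HasDerivAt (fun t => ρ t y ^ (-(1:ℝ)/3))
      ((-(1:ℝ)/3) * ρ x y ^ ((-(1:ℝ)/3) - 1) * (2*a*p + 2*b*q)) x := by
    have h := hρd1.rpow_const (p := -(1:ℝ)/3) (Or.inl hr0)
    convert h using 1; ring
  have hU2d1 : HasDerivAt (fun t => U2 t y) (-p) x := by
    have hfun : (fun t => U2 t y) = fun t => -Y1 t y := funext fun t => hU2 t y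
    rw [hfun]; exact hY1d1.neg
  have e1 : pd1 ω2 x y = (-(1:ℝ)/3) * ρ x y ^ ((-(1:ℝ)/3) - 1) * (2*a*p + 2*b*q) * U2 x y
      + ρ x y ^ (-(1:ℝ)/3) * (-p) := by
    have hfun : (fun t => ω2 t y) = fun t => ρ t y ^ (-(1:ℝ)/3) * U2 t y :=
      funext fun t => hω2 t y
    rw [pd1, hfun]
    exact (hrpow1.mul hU2d1).deriv
  -- derivative of ω1 in direction 2
  have hrpow2 : HasDerivAt (fun t => ρ x t ^ (-(1:ℝ)/3))
      ((-(1:ℝ)/3) * ρ x y ^ ((-(1:ℝ)/3) - 1) * (2*a*u + 2*b*v)) y := by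
    have h := hρd2.rpow_const (p := -(1:ℝ)/3) (Or.inl hr0)
    convert h using 1; ring
  have hU1d2 : HasDerivAt (fun t => U1 x t) v y := by
    have hfun : (fun t => U1 x t) = fun t => Y2 x t := funext fun t => hU1 x t
    rw [hfun]; exact hY2d2
  have e2 : pd2 ω1 x y = (-(1:ℝ)/3) * ρ x y ^ ((-(1:ℝ)/3) - 1) * (2*a*u + 2*b*v) * U1 x y
      + ρ x y ^ (-(1:ℝ)/3) * v := by
    have hfun : (fun t => ω1 x t) = fun t => ρ x t ^ (-(1:ℝ)/3) * U1 x t :=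
      funext fun t => hω1 x t
    rw [pd2, hfun]
    exact (hrpow2.mul hU1d2).deriv
  -- the key algebraic identity from U·V = 0
  have hpdU1 : pd1 U1 x y = q := by
    rw [pd1, hq, pd1]
    congr 1
    exact funext fun t => hU1 t y
  have hpdU2 : pd2 U2 x y = -u := by
    have hfun : (fun t => U2 x t) = fun t => -Y1 x t := funext fun t => hU2 x t
    rw [pd2, hfun]
    rw [hu, pd2]
    rw [deriv.fun_neg]
  have key : b * V1 x y + (-a) * V2 x y = 0 := by
    have := hUV x y
    rwa [hU1 x y, hU2 x y] at this
  rw [hV1, hV2, hμ, hφ, hpdU1, hpdU2, hU1, hU2] at key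
  -- finish
  rw [← ha, ← hb, ← hp, ← hq, ← hu, ← hv] at key
  have hrq : ρ x y = a ^ 2 + b ^ 2 := hρ x y
  have hab : a ^ 2 + b ^ 2 ≠ 0 := hrq ▸ hr0
  rw [e1, e2, hU1, hU2, hrq, ← ha, ← hb]
  set w := (a ^ 2 + b ^ 2) ^ (-(1:ℝ)/3 - 1) with hw
  set s := (a ^ 2 + b ^ 2) ^ (-(1:ℝ)/3) with hs
  have hws : w * (a ^ 2 + b ^ 2) = s := by
    rw [hw, hs, ← Real.rpow_add_one hab]
    norm_num
  linear_combination (-(2 * w) / 3) * key + (p + v) * hws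
end

section
/- On ℝ² with flat metric, suppose σ, μₐ, Λ satisfy the prolonged system ∂ₐσ = μₐ, ∂ₐμ_b = -P_{ab}σ - Λδ_{ab}, ∂ₐΛ = -(1/2)Uₐσ + Pₐ{}^dμ_d, where P is symmetric with flat curvature compatibility (i.e., P arises from a Möbius structure on the flat plane), Y_c = ε^{ab}(∂ₐP_{bc} - ∂_bP_{ac}), Uₐ = ε_{ac}Y^c, μ = (1/2)∂ₐY^a. Then the first integrability constraint Yₐμ^a + μσ = 0 holds. -/
section helpers

variable {f : ℝ → ℝ → ℝ}

lemma pd1_eq_fderiv (hf : ContDiff ℝ (⊤ : ℕ∞) (fun p : ℝ × ℝ => f p.1 p.2)) (x y : ℝ) :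
    pd1 f x y = fderiv ℝ (fun p : ℝ × ℝ => f p.1 p.2) (x, y) (1, 0) := by
  have hF : DifferentiableAt ℝ (fun p : ℝ × ℝ => f p.1 p.2) (x, y) :=
    hf.differentiable (by simp) (x, y)
  have hg : HasDerivAt (fun t : ℝ => (t, y)) ((1 : ℝ), (0 : ℝ)) x :=
    (hasDerivAt_id x).prodMk (hasDerivAt_const x y)
  have := hF.hasFDerivAt.comp_hasDerivAt x hg
  simpa [pd1, Function.comp_def] using this.deriv

lemma hasDerivAt_pd1 (hf : ContDiff ℝ (⊤ : ℕ∞) (fun p : ℝ × ℝ => f p.1 p.2)) (x y : ℝ) :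
    HasDerivAt (fun t => f t y) (pd1 f x y) x := by
  rw [pd1_eq_fderiv hf x y]
  have hF : DifferentiableAt ℝ (fun p : ℝ × ℝ => f p.1 p.2) (x, y) :=
    hf.differentiable (by simp) (x, y)
  have hg : HasDerivAt (fun t : ℝ => (t, y)) ((1 : ℝ), (0 : ℝ)) x :=
    (hasDerivAt_id x).prodMk (hasDerivAt_const x y)
  have := hF.hasFDerivAt.comp_hasDerivAt x hg
  simpa [Function.comp_def] using this

lemma pd2_eq_fderiv (hf : ContDiff ℝ (⊤ : ℕ∞) (fun p : ℝ × ℝ => f p.1 p.2)) (x y : ℝ) :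
    pd2 f x y = fderiv ℝ (fun p : ℝ × ℝ => f p.1 p.2) (x, y) (0, 1) := by
  have hF : DifferentiableAt ℝ (fun p : ℝ × ℝ => f p.1 p.2) (x, y) :=
    hf.differentiable (by simp) (x, y)
  have hg : HasDerivAt (fun t : ℝ => (x, t)) ((0 : ℝ), (1 : ℝ)) y :=
    (hasDerivAt_const y x).prodMk (hasDerivAt_id y)
  have := hF.hasFDerivAt.comp_hasDerivAt y hg
  simpa [pd2, Function.comp_def] using this.deriv

lemma hasDerivAt_pd2 (hf : ContDiff ℝ (⊤ : ℕ∞) (fun p : ℝ × ℝ => f p.1 p.2)) (x y : ℝ) :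
    HasDerivAt (fun t => f x t) (pd2 f x y) y := by
  rw [pd2_eq_fderiv hf x y]
  have hF : DifferentiableAt ℝ (fun p : ℝ × ℝ => f p.1 p.2) (x, y) :=
    hf.differentiable (by simp) (x, y)
  have hg : HasDerivAt (fun t : ℝ => (x, t)) ((0 : ℝ), (1 : ℝ)) y :=
    (hasDerivAt_const y x).prodMk (hasDerivAt_id y)
  have := hF.hasFDerivAt.comp_hasDerivAt y hg
  simpa [Function.comp_def] using this

lemma contDiff_pd1 (hf : ContDiff ℝ (⊤ : ℕ∞) (fun p : ℝ × ℝ => f p.1 p.2)) :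
    ContDiff ℝ (⊤ : ℕ∞) (fun p : ℝ × ℝ => pd1 f p.1 p.2) := by
  have : (fun p : ℝ × ℝ => pd1 f p.1 p.2)
      = fun p : ℝ × ℝ => fderiv ℝ (fun q : ℝ × ℝ => f q.1 q.2) p ((1 : ℝ), (0 : ℝ)) := by
    funext p
    exact pd1_eq_fderiv hf p.1 p.2
  rw [this]
  exact (ContinuousLinearMap.apply ℝ ℝ ((1 : ℝ), (0 : ℝ))).contDiff.comp
    (hf.fderiv_right (by simp))

lemma contDiff_pd2 (hf : ContDiff ℝ (⊤ : ℕ∞) (fun p : ℝ × ℝ => f p.1 p.2)) :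
    ContDiff ℝ (⊤ : ℕ∞) (fun p : ℝ × ℝ => pd2 f p.1 p.2) := by
  have : (fun p : ℝ × ℝ => pd2 f p.1 p.2)
      = fun p : ℝ × ℝ => fderiv ℝ (fun q : ℝ × ℝ => f q.1 q.2) p ((0 : ℝ), (1 : ℝ)) := by
    funext p
    exact pd2_eq_fderiv hf p.1 p.2
  rw [this]
  exact (ContinuousLinearMap.apply ℝ ℝ ((0 : ℝ), (1 : ℝ))).contDiff.comp
    (hf.fderiv_right (by simp))

lemma pd_symm (hf : ContDiff ℝ (⊤ : ℕ∞) (fun p : ℝ × ℝ => f p.1 p.2)) (x y : ℝ) :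
    pd2 (pd1 f) x y = pd1 (pd2 f) x y := by
  set F : ℝ × ℝ → ℝ := fun p => f p.1 p.2 with hFdef
  have hsymm : IsSymmSndFDerivAt ℝ F (x, y) :=
    (hf.contDiffAt).isSymmSndFDerivAt (by rw [minSmoothness_of_isRCLikeNormedField]; exact WithTop.coe_le_coe.mpr (le_top : (2 : ℕ∞) ≤ ⊤))
  have h1 : pd2 (pd1 f) x y = fderiv ℝ (fderiv ℝ F) (x, y) (0, 1) (1, 0) := by
    rw [pd2_eq_fderiv (contDiff_pd1 hf) x y]
    have : (fun p : ℝ × ℝ => pd1 f p.1 p.2)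
        = fun p : ℝ × ℝ => fderiv ℝ F p ((1 : ℝ), (0 : ℝ)) := by
      funext p; exact pd1_eq_fderiv hf p.1 p.2
    rw [this]
    have hd : DifferentiableAt ℝ (fderiv ℝ F) (x, y) :=
      ((hf.fderiv_right (m := (⊤ : ℕ∞)) (by simp)).differentiable (by simp)) (x, y)
    rw [fderiv_clm_apply hd (differentiableAt_const _)]
    simp
  have h2 : pd1 (pd2 f) x y = fderiv ℝ (fderiv ℝ F) (x, y) (1, 0) (0, 1) := by
    rw [pd1_eq_fderiv (contDiff_pd2 hf) x y]
    have : (fun p : ℝ × ℝ => pd2 f p.1 p.2)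
        = fun p : ℝ × ℝ => fderiv ℝ F p ((0 : ℝ), (1 : ℝ)) := by
      funext p; exact pd2_eq_fderiv hf p.1 p.2
    rw [this]
    have hd : DifferentiableAt ℝ (fderiv ℝ F) (x, y) :=
      ((hf.fderiv_right (m := (⊤ : ℕ∞)) (by simp)).differentiable (by simp)) (x, y)
    rw [fderiv_clm_apply hd (differentiableAt_const _)]
    simp
  rw [h1, h2, hsymm]

end helpers

/-- on flat ℝ², solutions of the full prolonged
conformal-to-Einstein system (including ∂ₐΛ = -(1/2)Uₐσ + Pₐ{}^dμ_d) satisfy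
the first integrability constraint Yₐμ^a + μσ = 0, where
Y_c = ε^{ab}(∂ₐP_{bc} - ∂_bP_{ac}), Uₐ = ε_{ac}Y^c and μ = (1/2)∂ₐY^a
(denoted ν below to distinguish it from the 1-form μₐ). -/
theorem stmt11
    (σ μ1 μ2 Λ P11 P12 P22 Y1 Y2 U1 U2 ν : ℝ → ℝ → ℝ)
    (hσsm : ContDiff ℝ (⊤ : ℕ∞) (fun p : ℝ × ℝ => σ p.1 p.2))
    (hμ1sm : ContDiff ℝ (⊤ : ℕ∞) (fun p : ℝ × ℝ => μ1 p.1 p.2))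
    (hμ2sm : ContDiff ℝ (⊤ : ℕ∞) (fun p : ℝ × ℝ => μ2 p.1 p.2))
    (hΛsm : ContDiff ℝ (⊤ : ℕ∞) (fun p : ℝ × ℝ => Λ p.1 p.2))
    (hP11sm : ContDiff ℝ (⊤ : ℕ∞) (fun p : ℝ × ℝ => P11 p.1 p.2))
    (hP12sm : ContDiff ℝ (⊤ : ℕ∞) (fun p : ℝ × ℝ => P12 p.1 p.2))
    (hP22sm : ContDiff ℝ (⊤ : ℕ∞) (fun p : ℝ × ℝ => P22 p.1 p.2))
    (htr : ∀ x y, P11 x y + P22 x y = 0)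
    (hY1 : ∀ x y, Y1 x y = 2 * (pd1 P12 x y - pd2 P11 x y))
    (hY2 : ∀ x y, Y2 x y = 2 * (pd1 P22 x y - pd2 P12 x y))
    (hU1 : ∀ x y, U1 x y = Y2 x y) (hU2 : ∀ x y, U2 x y = -Y1 x y)
    (hν : ∀ x y, ν x y = (pd1 Y1 x y + pd2 Y2 x y) / 2)
    (h1 : ∀ x y, pd1 σ x y = μ1 x y)
    (h2 : ∀ x y, pd2 σ x y = μ2 x y)
    (h11 : ∀ x y, pd1 μ1 x y = -P11 x y * σ x y - Λ x y)
    (h12 : ∀ x y, pd1 μ2 x y = -P12 x y * σ x y)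
    (h21 : ∀ x y, pd2 μ1 x y = -P12 x y * σ x y)
    (h22 : ∀ x y, pd2 μ2 x y = -P22 x y * σ x y - Λ x y)
    (hL1 : ∀ x y, pd1 Λ x y
      = -(1/2) * U1 x y * σ x y + P11 x y * μ1 x y + P12 x y * μ2 x y)
    (hL2 : ∀ x y, pd2 Λ x y
      = -(1/2) * U2 x y * σ x y + P12 x y * μ1 x y + P22 x y * μ2 x y) :
    ∀ x y : ℝ, Y1 x y * μ1 x y + Y2 x y * μ2 x y + ν x y * σ x y = 0 := by
  intro x y
  have hA1 := contDiff_pd1 hP22sm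
  have hA2 := contDiff_pd2 hP12sm
  have hB1 := contDiff_pd1 hP12sm
  have hB2 := contDiff_pd2 hP11sm
  -- first mixed derivative of Λ
  have e1 : pd2 (pd1 Λ) x y
      = -((pd2 (pd1 P22) x y - pd2 (pd2 P12) x y) * σ x y
            + (pd1 P22 x y - pd2 P12 x y) * pd2 σ x y)
        + (pd2 P11 x y * μ1 x y + P11 x y * pd2 μ1 x y)
        + (pd2 P12 x y * μ2 x y + P12 x y * pd2 μ2 x y) := by
    have hfun : (fun t => pd1 Λ x t)
        = (fun t => -((pd1 P22 x t - pd2 P12 x t) * σ x t)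
            + P11 x t * μ1 x t + P12 x t * μ2 x t) := by
      funext t
      rw [hL1 x t, hU1 x t, hY2 x t]
      ring
    rw [show pd2 (pd1 Λ) x y = deriv (fun t => pd1 Λ x t) y from rfl, hfun]
    exact HasDerivAt.deriv
      (((((hasDerivAt_pd2 hA1 x y).sub (hasDerivAt_pd2 hA2 x y)).mul
          (hasDerivAt_pd2 hσsm x y)).neg.add
        ((hasDerivAt_pd2 hP11sm x y).mul (hasDerivAt_pd2 hμ1sm x y))).add
        ((hasDerivAt_pd2 hP12sm x y).mul (hasDerivAt_pd2 hμ2sm x y)))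
  -- second mixed derivative of Λ
  have e2 : pd1 (pd2 Λ) x y
      = ((pd1 (pd1 P12) x y - pd1 (pd2 P11) x y) * σ x y
            + (pd1 P12 x y - pd2 P11 x y) * pd1 σ x y)
        + (pd1 P12 x y * μ1 x y + P12 x y * pd1 μ1 x y)
        + (pd1 P22 x y * μ2 x y + P22 x y * pd1 μ2 x y) := by
    have hfun : (fun t => pd2 Λ t y)
        = (fun t => (pd1 P12 t y - pd2 P11 t y) * σ t y
            + P12 t y * μ1 t y + P22 t y * μ2 t y) := by
      funext t
      rw [hL2 t y, hU2 t y, hY1 t y]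
      ring
    rw [show pd1 (pd2 Λ) x y = deriv (fun t => pd2 Λ t y) x from rfl, hfun]
    exact HasDerivAt.deriv
      ((((hasDerivAt_pd1 hB1 x y).sub (hasDerivAt_pd1 hB2 x y)).mul
          (hasDerivAt_pd1 hσsm x y)).add
        ((hasDerivAt_pd1 hP12sm x y).mul (hasDerivAt_pd1 hμ1sm x y)) |>.add
        ((hasDerivAt_pd1 hP22sm x y).mul (hasDerivAt_pd1 hμ2sm x y)))
  simp only [h1, h2, h11, h12, h21, h22] at e1 e2
  -- derivatives of Y
  have hpdY1 : pd1 Y1 x y = 2 * (pd1 (pd1 P12) x y - pd1 (pd2 P11) x y) := by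
    have hfun : (fun t => Y1 t y)
        = (fun t => 2 * (pd1 P12 t y - pd2 P11 t y)) := funext fun t => hY1 t y
    rw [show pd1 Y1 x y = deriv (fun t => Y1 t y) x from rfl, hfun]
    exact HasDerivAt.deriv
      (((hasDerivAt_pd1 hB1 x y).sub (hasDerivAt_pd1 hB2 x y)).const_mul 2)
  have hpdY2 : pd2 Y2 x y = 2 * (pd2 (pd1 P22) x y - pd2 (pd2 P12) x y) := by
    have hfun : (fun t => Y2 x t)
        = (fun t => 2 * (pd1 P22 x t - pd2 P12 x t)) := funext fun t => hY2 x t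
    rw [show pd2 Y2 x y = deriv (fun t => Y2 x t) y from rfl, hfun]
    exact HasDerivAt.deriv
      (((hasDerivAt_pd2 hA1 x y).sub (hasDerivAt_pd2 hA2 x y)).const_mul 2)
  have key := pd_symm hΛsm x y
  rw [e1, e2] at key
  rw [hY1 x y, hY2 x y, hν x y, hpdY1, hpdY2]
  linear_combination -key
end

section
/- For the Möbius structure P₁₁ = -a - 2a²x², P₁₂ = 0, P₂₂ = a + 2a²x² (a a nonzero constant) on the flat plane ℝ²: Y = 8a²x dy, U has U^a∂ₐ such that φ = 4a², ρ = 64a⁴x², μ = 0, V = -32a⁴x dy, and hence UₐV^a = 0 and k = 0, so the non-generic obstruction k + fμ vanishes. -/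
/-! Every field involved depends on `x` alone, so `∂_y` kills it and `∂_x` is an ordinary
derivative. Then `Y = (0, 8a²x)` and `U = (8a²x, 0)`; `μ = 0` because `Y₂` does not depend
on `y`, and `k = 0` because every term of `k` carries a factor `P₁₂ = 0`, `Y₁`,
`U₂ = -Y₁` or `μ`. -/

theorem pd1_of_fst (g : ℝ → ℝ) (x y : ℝ) : pd1 (fun s _ => g s) x y = deriv g x := rfl

theorem pd2_of_fst (g : ℝ → ℝ) (x y : ℝ) : pd2 (fun s _ => g s) x y = 0 :=
  deriv_const y (g x)

theorem deriv_const_add_const_mul_sq (b c x : ℝ) :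
    deriv (fun t => b + c * t ^ 2) x = 2 * c * x :=
  (((hasDerivAt_pow 2 x).const_mul c).const_add b).deriv.trans (by ring)

theorem stmt14_general
    (a : ℝ)
    (P11 P12 P22 Y1 Y2 U1 U2 V1 V2 μ φ ρ k : ℝ → ℝ → ℝ)
    (hP11 : P11 = fun x _ => -a - 2 * a ^ 2 * x ^ 2)
    (hP12 : P12 = fun _ _ => 0)
    (hP22 : P22 = fun x _ => a + 2 * a ^ 2 * x ^ 2)
    (hY1 : ∀ x y, Y1 x y = 2 * (pd1 P12 x y - pd2 P11 x y))
    (hY2 : ∀ x y, Y2 x y = 2 * (pd1 P22 x y - pd2 P12 x y))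
    (hU1 : ∀ x y, U1 x y = Y2 x y) (hU2 : ∀ x y, U2 x y = -Y1 x y)
    (hρ : ∀ x y, ρ x y = Y1 x y ^ 2 + Y2 x y ^ 2)
    (hμ : ∀ x y, μ x y = (pd1 Y1 x y + pd2 Y2 x y) / 2)
    (hφ : ∀ x y, φ x y = (pd1 U1 x y + pd2 U2 x y) / 2)
    (hV1 : ∀ x y, V1 x y = U1 x y * pd1 Y1 x y + U2 x y * pd2 Y1 x y
      + μ x y * U1 x y - 3 * φ x y * Y1 x y)
    (hV2 : ∀ x y, V2 x y = U1 x y * pd1 Y2 x y + U2 x y * pd2 Y2 x y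
      + μ x y * U2 x y - 3 * φ x y * Y2 x y)
    (hk : ∀ x y, k x y =
      (P11 x y * U1 x y * Y1 x y + P12 x y * U1 x y * Y2 x y
        + P12 x y * U2 x y * Y1 x y + P22 x y * U2 x y * Y2 x y)
      - (U1 x y * pd1 μ x y + U2 x y * pd2 μ x y) + 3 * φ x y * μ x y) :
    ∀ x y : ℝ,
      Y1 x y = 0 ∧ Y2 x y = 8 * a ^ 2 * x ∧
      φ x y = 4 * a ^ 2 ∧ ρ x y = 64 * a ^ 4 * x ^ 2 ∧ μ x y = 0 ∧
      V1 x y = 0 ∧ V2 x y = -32 * a ^ 4 * x ∧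
      U1 x y * V1 x y + U2 x y * V2 x y = 0 ∧ k x y = 0 ∧
      (∀ f : ℝ, k x y + f * μ x y = 0) := by
  have hY1' : Y1 = fun _ _ => 0 := by
    funext x y; simp [hY1, hP11, hP12, pd1_of_fst, pd2_of_fst]
  have hY2' : Y2 = fun x _ => 8 * a ^ 2 * x := by
    funext x y
    simp only [hY2, hP22, hP12, pd1_of_fst, pd2_of_fst, deriv_const_add_const_mul_sq]
    ring
  have hU1' : U1 = fun x _ => 8 * a ^ 2 * x := by funext x y; rw [hU1, hY2']
  have hU2' : U2 = fun _ _ => 0 := by funext x y; simp [hU2, hY1']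
  have hμ' : μ = fun _ _ => 0 := by
    funext x y; simp [hμ, hY1', hY2', pd1_of_fst, pd2_of_fst]
  have hφ' : φ = fun _ _ => 4 * a ^ 2 := by
    funext x y
    simp only [hφ, hU1', hU2', pd1_of_fst, pd2_of_fst, deriv_const_mul_id']
    ring
  intro x y
  simp only [hρ, hV1, hV2, hk, hP11, hP12, hP22, hY1', hY2', hU1', hU2', hμ', hφ',
    pd1_of_fst, pd2_of_fst, deriv_const, deriv_const_mul_id']
  exact ⟨trivial, trivial, trivial, by ring, trivial, by ring, by ring, by ring, by ring,
    fun f => by ring⟩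

/-- for the Möbius structure P₁₁ = -a - 2a²x², P₁₂ = 0,
P₂₂ = a + 2a²x² (a ≠ 0) on the flat plane: Y = 8a²x dy, φ = 4a², ρ = 64a⁴x²,
μ = 0, V = -32a⁴x dy, hence UₐV^a = 0 and k = 0, so the non-generic obstruction
k + fμ vanishes (for any f). -/
theorem stmt14
    (a : ℝ) (ha : a ≠ 0)
    (P11 P12 P22 Y1 Y2 U1 U2 V1 V2 μ φ ρ k : ℝ → ℝ → ℝ)
    (hP11 : P11 = fun x _ => -a - 2 * a ^ 2 * x ^ 2)
    (hP12 : P12 = fun _ _ => 0)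
    (hP22 : P22 = fun x _ => a + 2 * a ^ 2 * x ^ 2)
    (hY1 : ∀ x y, Y1 x y = 2 * (pd1 P12 x y - pd2 P11 x y))
    (hY2 : ∀ x y, Y2 x y = 2 * (pd1 P22 x y - pd2 P12 x y))
    (hU1 : ∀ x y, U1 x y = Y2 x y) (hU2 : ∀ x y, U2 x y = -Y1 x y)
    (hρ : ∀ x y, ρ x y = Y1 x y ^ 2 + Y2 x y ^ 2)
    (hμ : ∀ x y, μ x y = (pd1 Y1 x y + pd2 Y2 x y) / 2)
    (hφ : ∀ x y, φ x y = (pd1 U1 x y + pd2 U2 x y) / 2)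
    (hV1 : ∀ x y, V1 x y = U1 x y * pd1 Y1 x y + U2 x y * pd2 Y1 x y
      + μ x y * U1 x y - 3 * φ x y * Y1 x y)
    (hV2 : ∀ x y, V2 x y = U1 x y * pd1 Y2 x y + U2 x y * pd2 Y2 x y
      + μ x y * U2 x y - 3 * φ x y * Y2 x y)
    (hk : ∀ x y, k x y =
      (P11 x y * U1 x y * Y1 x y + P12 x y * U1 x y * Y2 x y
        + P12 x y * U2 x y * Y1 x y + P22 x y * U2 x y * Y2 x y)
      - (U1 x y * pd1 μ x y + U2 x y * pd2 μ x y) + 3 * φ x y * μ x y) :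
    ∀ x y : ℝ,
      Y1 x y = 0 ∧ Y2 x y = 8 * a ^ 2 * x ∧
      φ x y = 4 * a ^ 2 ∧ ρ x y = 64 * a ^ 4 * x ^ 2 ∧ μ x y = 0 ∧
      V1 x y = 0 ∧ V2 x y = -32 * a ^ 4 * x ∧
      U1 x y * V1 x y + U2 x y * V2 x y = 0 ∧ k x y = 0 ∧
      (∀ f : ℝ, k x y + f * μ x y = 0) :=
  stmt14_general a P11 P12 P22 Y1 Y2 U1 U2 V1 V2 μ φ ρ k hP11 hP12 hP22 hY1 hY2 hU1 hU2 hρ hμ hφ hV1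
    hV2 hk
end

section
/- Every solution ξ of the Airy equation ξ'' = xξ gives, via s = log ξ (on a region where ξ > 0) and σ(x,y) = ρ^{-1/6}e^{s(η)} with η = x, ρ = 1, a solution σ(x,y) = ξ(x) of the conformal-to-Einstein equation on ℝ² with Möbius structure P₁₁ = -x/2, P₁₂ = 0, P₂₂ = x/2: that is, ∂₁∂₁σ + P₁₁σ = ∂₂∂₂σ + P₂₂σ and ∂₁∂₂σ = 0. Conversely any solution of this conformal-to-Einstein equation is of the form σ(x,y) = ξ(x) with ξ'' = xξ; hence the solution space is exactly 2-dimensional. -/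
open Filter Finset Topology

namespace Stmt16Aux


/-- coefficients give an entire power series -/
def Entire (c : ℕ → ℝ) : Prop := ∀ r : ℝ, 0 < r → Summable fun n => |c n| * r ^ n

noncomputable def psum (c : ℕ → ℝ) (x : ℝ) : ℝ := ∑' n, c n * x ^ n

lemma Entire.summable {c : ℕ → ℝ} (hc : Entire c) (x : ℝ) :
    Summable fun n => c n * x ^ n := by
  have hr : (0:ℝ) < |x| + 1 := by positivity
  refine Summable.of_norm_bounded (hc _ hr) fun n => ?_
  rw [norm_mul, norm_pow, Real.norm_eq_abs, Real.norm_eq_abs]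
  gcongr
  linarith [abs_nonneg x]

lemma Entire.shift {c : ℕ → ℝ} (hc : Entire c) :
    Entire (fun n => ((n:ℝ)+1) * c (n+1)) := by
  intro r hr
  have h2 : Summable fun n => (1/r) * (|c (n+1)| * (2*r) ^ (n+1)) :=
    ((hc (2*r) (by positivity)).comp_injective (add_left_injective 1)).mul_left _
  refine Summable.of_nonneg_of_le (fun n => by positivity) (fun n => ?_) h2
  have hn : ((n:ℝ)+1) ≤ 2 ^ (n+1) := by
    exact_mod_cast (Nat.lt_two_pow_self (n := n+1)).le
  have e : (1/r) * (|c (n+1)| * (2*r) ^ (n+1)) = |c (n+1)| * (2 ^ (n+1) * r ^ n) := by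
    rw [mul_pow, pow_succ]
    field_simp
    ring
  rw [abs_mul, e]
  have h1 : |(n:ℝ)+1| = (n:ℝ)+1 := abs_of_pos (by positivity)
  rw [h1]
  calc ((n:ℝ)+1) * |c (n+1)| * r ^ n ≤ 2 ^ (n+1) * |c (n+1)| * r ^ n := by
        gcongr
    _ = |c (n+1)| * (2 ^ (n+1) * r ^ n) := by ring

lemma Entire.hasDerivAt {c : ℕ → ℝ} (hc : Entire c) (x : ℝ) :
    HasDerivAt (psum c) (psum (fun n => ((n:ℝ)+1) * c (n+1)) x) x := by
  set c' : ℕ → ℝ := fun n => ((n:ℝ)+1) * c (n+1) with hc'def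
  set R : ℝ := |x| + 1 with hR
  have hRpos : (0:ℝ) < R := by positivity
  have hxmem : x ∈ Metric.ball (0:ℝ) R := by
    simp only [Metric.mem_ball, dist_zero_right, Real.norm_eq_abs, hR]; linarith
  have hsum' : Summable fun n => |c' n| * R ^ n := hc.shift R hRpos
  have hunif : TendstoUniformlyOn
      (fun N => fun y => ∑ n ∈ Finset.range N, c' n * y ^ n)
      (fun y => ∑' n, c' n * y ^ n) atTop (Metric.ball (0:ℝ) R) := by
    refine tendstoUniformlyOn_tsum_nat hsum' fun n y hy => ?_
    rw [norm_mul, norm_pow, Real.norm_eq_abs, Real.norm_eq_abs]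
    have : |y| < R := by simpa [Real.norm_eq_abs] using hy
    gcongr
  have hF : ∀ N : ℕ, ∀ y ∈ Metric.ball (0:ℝ) R,
      HasDerivAt (fun z => ∑ n ∈ Finset.range (N+1), c n * z ^ n)
        (∑ n ∈ Finset.range N, c' n * y ^ n) y := by
    intro N y _
    have h1 : HasDerivAt (fun z => ∑ n ∈ Finset.range (N+1), c n * z ^ n)
        (∑ n ∈ Finset.range (N+1), c n * ((n:ℝ) * y ^ (n-1))) y :=
      HasDerivAt.fun_sum fun n _ => (hasDerivAt_pow n y).const_mul (c n)
    convert h1 using 1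
    rw [Finset.sum_range_succ']
    simp only [Nat.cast_zero, zero_mul, mul_zero, add_zero, Nat.cast_succ]
    refine (Finset.sum_congr rfl fun n _ => ?_).symm
    simp only [Nat.add_sub_cancel, hc'def]
    push_cast
    ring
  have hfg : ∀ y ∈ Metric.ball (0:ℝ) R,
      Tendsto (fun N => ∑ n ∈ Finset.range (N+1), c n * y ^ n) atTop (𝓝 (psum c y)) := by
    intro y _
    have := (hc.summable y).hasSum.tendsto_sum_nat
    exact this.comp (tendsto_add_atTop_nat 1)
  have := hasDerivAt_of_tendstoUniformlyOn Metric.isOpen_ball hunif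
    (Eventually.of_forall hF) hfg hxmem
  exact this

lemma Entire.differentiable {c : ℕ → ℝ} (hc : Entire c) : Differentiable ℝ (psum c) :=
  fun x => (hc.hasDerivAt x).differentiableAt

lemma Entire.deriv_eq {c : ℕ → ℝ} (hc : Entire c) :
    deriv (psum c) = psum (fun n => ((n:ℝ)+1) * c (n+1)) :=
  funext fun x => (hc.hasDerivAt x).deriv



lemma Entire.contDiff {c : ℕ → ℝ} (hc : Entire c) : ContDiff ℝ (⊤ : ℕ∞) (psum c) := by
  set p := FormalMultilinearSeries.ofScalars ℝ c with hp
  have hrad : p.radius = ⊤ := by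
    apply p.radius_eq_top_of_summable_norm
    intro r
    have hr1 : (0:ℝ) < (r:ℝ) + 1 := by positivity
    refine Summable.of_nonneg_of_le (fun n => by positivity) (fun n => ?_) (hc _ hr1)
    rw [FormalMultilinearSeries.ofScalars_norm]
    have : ((r:ℝ)) ^ n ≤ ((r:ℝ)+1) ^ n := by
      gcongr
      linarith [r.coe_nonneg]
    calc ‖c n‖ * (r:ℝ) ^ n ≤ ‖c n‖ * ((r:ℝ)+1) ^ n := by gcongr <;> positivity
      _ = |c n| * ((r:ℝ)+1) ^ n := rfl
  have hpos : (0:ENNReal) < p.radius := by rw [hrad]; exact ENNReal.zero_lt_top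
  have hball : HasFPowerSeriesOnBall p.sum p 0 p.radius := p.hasFPowerSeriesOnBall hpos
  have han : AnalyticOnNhd ℝ p.sum Set.univ := by
    intro y _
    refine hball.analyticAt_of_mem ?_
    rw [hrad]
    simp [EMetric.mem_ball, edist_lt_top]
  have hsum_eq : psum c = p.sum := by
    funext y
    rw [FormalMultilinearSeries.sum]
    refine tsum_congr fun n => ?_
    rw [hp, FormalMultilinearSeries.ofScalars_apply_eq, smul_eq_mul]
  rw [hsum_eq]
  exact han.contDiff


noncomputable def ac (a b : ℝ) : ℕ → ℝ
  | 0 => a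
  | 1 => b
  | 2 => 0
  | (n+3) => ac a b n / (((n:ℝ)+3) * ((n:ℝ)+2))

lemma ac_bound (a b : ℝ) : ∀ n : ℕ, |ac a b n| * (Nat.factorial (n/3) : ℝ) ≤ max |a| |b| := by
  intro n
  induction n using Nat.strong_induction_on with
  | _ n ih =>
    match n with
    | 0 => simpa [ac] using le_max_left |a| |b|
    | 1 => simpa [ac] using le_max_right |a| |b|
    | 2 =>
      simp only [ac, abs_zero, zero_mul]
      positivity
    | (m+3) =>
      have key := ih m (by omega)
      have hdiv : (m+3)/3 = m/3 + 1 := Nat.add_div_right m (by norm_num)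
      rw [hdiv]
      have hfac : (Nat.factorial (m/3 + 1) : ℝ) = (Nat.factorial (m/3) : ℝ) * ((m/3 : ℕ) + 1 : ℝ) := by
        rw [Nat.factorial_succ]; push_cast; ring
      have hpos : (0:ℝ) < ((m:ℝ)+3) * ((m:ℝ)+2) := by positivity
      have habs : |ac a b (m+3)| = |ac a b m| / (((m:ℝ)+3) * ((m:ℝ)+2)) := by
        have e : ac a b (m+3) = ac a b m / (((m:ℝ)+3) * ((m:ℝ)+2)) := by simp only [ac]
        rw [e, abs_div, abs_of_pos hpos]
      rw [habs, hfac]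
      have hq : ((m/3 : ℕ) : ℝ) + 1 ≤ ((m:ℝ)+3) * ((m:ℝ)+2) := by
        have : ((m/3 : ℕ) : ℝ) ≤ (m:ℝ) := by exact_mod_cast Nat.div_le_self m 3
        nlinarith [Nat.cast_nonneg (α := ℝ) m]
      calc |ac a b m| / (((m:ℝ)+3) * ((m:ℝ)+2)) * ((Nat.factorial (m/3) : ℝ) * (((m/3:ℕ):ℝ) + 1))
          ≤ |ac a b m| / (((m:ℝ)+3) * ((m:ℝ)+2)) * ((Nat.factorial (m/3) : ℝ) * (((m:ℝ)+3)*((m:ℝ)+2))) := by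
            gcongr
        _ = |ac a b m| * (Nat.factorial (m/3) : ℝ) := by field_simp
        _ ≤ max |a| |b| := key

lemma aux_summable (s : ℝ) : Summable fun n : ℕ => s^2 * ((s^3) ^ (n/3) / (Nat.factorial (n/3) : ℝ)) := by
  have hbase : Summable fun k : ℕ => (s^3)^k / (Nat.factorial k : ℝ) :=
    Real.summable_pow_div_factorial (s^3)
  have habs : Summable fun k : ℕ => |(s^3)^k / (Nat.factorial k : ℝ)| := hbase.abs
  have hg : Summable (fun _ : Fin 3 => |s^2|) := Summable.of_finite
  have hprod : Summable fun p : ℕ × Fin 3 =>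
      |(s^3)^p.1 / (Nat.factorial p.1 : ℝ)| * |s^2| :=
    Summable.mul_of_nonneg (f := fun k : ℕ => |(s^3)^k / (Nat.factorial k : ℝ)|)
      (g := fun _ : Fin 3 => |s^2|) habs hg (fun _ => abs_nonneg _) (fun _ => abs_nonneg _)
  have h2 := hprod.comp_injective (Nat.divModEquiv 3).injective
  refine Summable.of_abs (h2.congr fun n => ?_)
  simp only [Function.comp_apply, Nat.divModEquiv, Equiv.coe_fn_mk]
  simp only [abs_mul, abs_inv, abs_abs, div_eq_mul_inv]
  ring

lemma ac_entire (a b : ℝ) : Entire (ac a b) := by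
  intro r hr
  have hM0 : 0 ≤ max |a| |b| := le_trans (abs_nonneg a) (le_max_left _ _)
  have hs1 : (1:ℝ) ≤ max r 1 := le_max_right r 1
  have hs0 : (0:ℝ) < max r 1 := lt_of_lt_of_le one_pos hs1
  have hdom : Summable fun n : ℕ => max |a| |b| *
      ((max r 1)^2 * (((max r 1)^3) ^ (n/3) / (Nat.factorial (n/3) : ℝ))) :=
    (aux_summable (max r 1)).mul_left _
  refine Summable.of_nonneg_of_le (fun n => by positivity) (fun n => ?_) hdom
  have hb := ac_bound a b n
  have hfpos : (0:ℝ) < (Nat.factorial (n/3) : ℝ) := by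
    exact_mod_cast Nat.factorial_pos (n/3)
  have h1 : |ac a b n| ≤ max |a| |b| / (Nat.factorial (n/3) : ℝ) := by
    rw [le_div_iff₀ hfpos]; exact hb
  have h2 : r ^ n ≤ (max r 1)^2 * ((max r 1)^3)^(n/3) := by
    have h3 : r ^ n ≤ (max r 1) ^ n := by
      gcongr
      exact le_max_left r 1
    have h4 : (max r 1) ^ n ≤ (max r 1) ^ (3 * (n/3) + 2) := by
      apply pow_le_pow_right₀ hs1
      omega
    have h5 : (max r 1) ^ (3 * (n/3) + 2) = (max r 1)^2 * ((max r 1)^3)^(n/3) := by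
      rw [pow_add, pow_mul]; ring
    linarith
  calc |ac a b n| * r ^ n
      ≤ (max |a| |b| / (Nat.factorial (n/3) : ℝ)) * ((max r 1)^2 * ((max r 1)^3)^(n/3)) :=
        mul_le_mul h1 h2 (by positivity) (by positivity)
    _ = max |a| |b| * ((max r 1)^2 * (((max r 1)^3) ^ (n/3) / (Nat.factorial (n/3) : ℝ))) := by
        field_simp


noncomputable def af (a b : ℝ) : ℝ → ℝ := psum (ac a b)

lemma ac1_entire (a b : ℝ) : Entire (fun n => ((n:ℝ)+1) * ac a b (n+1)) :=
  (ac_entire a b).shift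

lemma ac2_entire (a b : ℝ) :
    Entire (fun n => ((n:ℝ)+1) * (((n+1:ℕ):ℝ)+1) * ac a b (n+2)) := by
  have := (ac1_entire a b).shift
  refine fun r hr => ((this r hr).congr fun n => ?_)
  push_cast
  ring_nf

lemma psum_zero (c : ℕ → ℝ) : psum c 0 = c 0 := by
  rw [psum]
  rw [tsum_eq_single 0 (fun n hn => by simp [zero_pow hn])]
  simp

lemma af_contDiff (a b : ℝ) : ContDiff ℝ (⊤ : ℕ∞) (af a b) := (ac_entire a b).contDiff

lemma af_deriv (a b : ℝ) : deriv (af a b) = psum (fun n => ((n:ℝ)+1) * ac a b (n+1)) :=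
  (ac_entire a b).deriv_eq

lemma af_deriv2 (a b : ℝ) : deriv (deriv (af a b))
    = psum (fun n => ((n:ℝ)+1) * (((n:ℝ)+1)+1) * ac a b (n+2)) := by
  rw [af_deriv, (ac1_entire a b).deriv_eq]
  funext x
  refine tsum_congr fun n => ?_
  push_cast
  ring_nf

lemma af_zero (a b : ℝ) : af a b 0 = a := by
  rw [af, psum_zero]; simp [ac]

lemma af_deriv_zero (a b : ℝ) : deriv (af a b) 0 = b := by
  rw [af_deriv, psum_zero]; simp [ac]

lemma af_ode (a b : ℝ) (x : ℝ) : deriv (deriv (af a b)) x = x * af a b x := by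
  have hent2 : Entire (fun n => ((n:ℝ)+1) * (((n:ℝ)+1)+1) * ac a b (n+2)) := by
    refine fun r hr => ((ac2_entire a b r hr).congr fun n => ?_)
    push_cast; ring_nf
  rw [af_deriv2]
  have hsum2 := hent2.summable x
  have lhs : psum (fun n => ((n:ℝ)+1) * (((n:ℝ)+1)+1) * ac a b (n+2)) x
      = ∑' n : ℕ, ac a b n * x ^ (n+1) := by
    rw [psum, hsum2.tsum_eq_zero_add]
    have h0 : ((0:ℕ):ℝ) + 1 = 1 := by norm_num
    have e0 : (((0:ℕ):ℝ)+1) * ((((0:ℕ):ℝ)+1)+1) * ac a b 2 * x ^ 0 = 0 := by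
      simp [ac]
    rw [e0, zero_add]
    refine tsum_congr fun n => ?_
    have hrec : ac a b (n+3) = ac a b n / (((n:ℝ)+3) * ((n:ℝ)+2)) := by simp only [ac]
    have hne : (((n:ℝ)+3) * ((n:ℝ)+2)) ≠ 0 := by positivity
    have : (((n+1:ℕ):ℝ)+1) * ((((n+1:ℕ):ℝ)+1)+1) * ac a b (n+3) = ac a b n := by
      rw [hrec]
      field_simp
      push_cast
      ring
    rw [show (n+1) + 2 = n + 3 from rfl, this]
  rw [lhs, af, psum, ← tsum_mul_left]
  refine tsum_congr fun n => ?_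
  rw [pow_succ]
  ring

/-- Uniqueness for the Airy equation with zero initial data. -/
lemma airy_unique {f : ℝ → ℝ} (h1 : ContDiff ℝ (⊤ : ℕ∞) f)
    (hode : ∀ x, deriv (deriv f) x = x * f x) (h0 : f 0 = 0) (h0' : deriv f 0 = 0) :
    ∀ x, f x = 0 := by
  have hd1 : Differentiable ℝ f := h1.differentiable (by simp)
  have hsm : ContDiff ℝ (⊤ : ℕ∞) f := h1.of_le (by simp)
  have hd2 : Differentiable ℝ (deriv f) := (contDiff_infty_iff_deriv.1 hsm).2.differentiable (by simp)
  set E : ℝ → ℝ := fun x => f x ^ 2 + deriv f x ^ 2 with hE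
  have hEderiv : ∀ x, HasDerivAt E (2 * (1+x) * (f x * deriv f x)) x := by
    intro x
    have hf' : HasDerivAt f (deriv f x) x := (hd1 x).hasDerivAt
    have hf'' : HasDerivAt (deriv f) (x * f x) x := by
      have := (hd2 x).hasDerivAt
      rwa [hode x] at this
    have := (hf'.fun_pow 2).add (hf''.fun_pow 2)
    refine this.congr_deriv ?_
    push_cast
    ring
  have hE0 : E 0 = 0 := by simp [hE, h0, h0']
  have hEnonneg : ∀ x, 0 ≤ E x := fun x => by positivity
  have key : ∀ x, E x ≤ 0 := by
    intro x₀
    rcases le_or_gt 0 x₀ with hx₀ | hx₀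
    · -- right side
      set K : ℝ := 1 + x₀ with hK
      set φ : ℝ → ℝ := fun x => E x * Real.exp (-(K * x)) with hφ
      have hφderiv : ∀ x, HasDerivAt φ
          ((2 * (1+x) * (f x * deriv f x) - K * E x) * Real.exp (-(K * x))) x := by
        intro x
        have hexp : HasDerivAt (fun x => Real.exp (-(K * x))) (Real.exp (-(K*x)) * (-K)) x := by
          have hlin : HasDerivAt (fun x : ℝ => -(K * x)) (-K) x := by
            simpa using ((hasDerivAt_id x).const_mul K).fun_neg
          exact (Real.hasDerivAt_exp (-(K*x))).comp x hlin
        have := (hEderiv x).mul hexp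
        refine this.congr_deriv ?_
        ring
      have hdiffφ : Differentiable ℝ φ := fun x => (hφderiv x).differentiableAt
      have hanti : AntitoneOn φ (Set.Icc 0 x₀) := by
        apply antitoneOn_of_deriv_nonpos (convex_Icc 0 x₀) hdiffφ.continuous.continuousOn
          (hdiffφ.differentiableOn)
        intro x hx
        rw [interior_Icc] at hx
        rw [(hφderiv x).deriv]
        have hxx : 0 < x ∧ x < x₀ := ⟨hx.1, hx.2⟩
        have hexp_pos : 0 < Real.exp (-(K * x)) := Real.exp_pos _
        have hquad : 2 * (1+x) * (f x * deriv f x) - K * E x ≤ 0 := by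
          simp only [hE, hK]
          nlinarith [sq_nonneg (f x - deriv f x), sq_nonneg (f x + deriv f x),
            mul_nonneg (by linarith : (0:ℝ) ≤ 1 + x) (sq_nonneg (f x - deriv f x)),
            mul_nonneg (by linarith : (0:ℝ) ≤ x₀ - x)
              (add_nonneg (sq_nonneg (f x)) (sq_nonneg (deriv f x)))]
        exact mul_nonpos_of_nonpos_of_nonneg hquad hexp_pos.le
      have h01 : (0:ℝ) ∈ Set.Icc 0 x₀ := ⟨le_refl 0, hx₀⟩
      have h02 : x₀ ∈ Set.Icc 0 x₀ := ⟨hx₀, le_refl x₀⟩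
      have := hanti h01 h02 hx₀
      rw [hφ] at this
      simp only [hE0, zero_mul] at this
      have hexp_pos : 0 < Real.exp (-(K * x₀)) := Real.exp_pos _
      nlinarith [hEnonneg x₀]
    · -- left side
      set K : ℝ := 1 - x₀ with hK
      set ψ : ℝ → ℝ := fun x => E x * Real.exp (K * x) with hψ
      have hψderiv : ∀ x, HasDerivAt ψ
          ((2 * (1+x) * (f x * deriv f x) + K * E x) * Real.exp (K * x)) x := by
        intro x
        have hexp : HasDerivAt (fun x => Real.exp (K * x)) (Real.exp (K*x) * K) x := by
          have hlin : HasDerivAt (fun x : ℝ => K * x) K x := by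
            simpa using (hasDerivAt_id x).const_mul K
          exact (Real.hasDerivAt_exp (K*x)).comp x hlin
        have := (hEderiv x).mul hexp
        refine this.congr_deriv ?_
        ring
      have hdiffψ : Differentiable ℝ ψ := fun x => (hψderiv x).differentiableAt
      have hmono : MonotoneOn ψ (Set.Icc x₀ 0) := by
        apply monotoneOn_of_deriv_nonneg (convex_Icc x₀ 0) hdiffψ.continuous.continuousOn
          (hdiffψ.differentiableOn)
        intro x hx
        rw [interior_Icc] at hx
        rw [(hψderiv x).deriv]
        have hexp_pos : 0 < Real.exp (K * x) := Real.exp_pos _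
        have hquad : 0 ≤ 2 * (1+x) * (f x * deriv f x) + K * E x := by
          simp only [hE, hK]
          nlinarith [mul_nonneg (by nlinarith [hx.1, hx.2] : (0:ℝ) ≤ -x₀ - x)
              (add_nonneg (sq_nonneg (f x)) (sq_nonneg (deriv f x))),
            mul_nonneg (by nlinarith [hx.1, hx.2] : (0:ℝ) ≤ x - x₀)
              (add_nonneg (sq_nonneg (f x)) (sq_nonneg (deriv f x))),
            sq_nonneg (f x - deriv f x), sq_nonneg (f x + deriv f x), hx.1, hx.2]
        exact mul_nonneg hquad hexp_pos.le
      have h01 : x₀ ∈ Set.Icc x₀ 0 := ⟨le_refl x₀, hx₀.le⟩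
      have h02 : (0:ℝ) ∈ Set.Icc x₀ 0 := ⟨hx₀.le, le_refl 0⟩
      have := hmono h01 h02 hx₀.le
      rw [hψ] at this
      simp only [hE0, zero_mul] at this
      have hexp_pos : 0 < Real.exp (K * x₀) := Real.exp_pos _
      nlinarith [hEnonneg x₀]
  intro x
  have h1 : E x = 0 := le_antisymm (key x) (hEnonneg x)
  simp only [hE] at h1
  have h2 : f x ^ 2 = 0 := by nlinarith [sq_nonneg (f x), sq_nonneg (deriv f x)]
  exact pow_eq_zero_iff (by norm_num : (2:ℕ) ≠ 0) |>.mp h2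

end Stmt16Aux

namespace Stmt16Aux

lemma contDiff_deriv {f : ℝ → ℝ} (h : ContDiff ℝ (⊤ : ℕ∞) f) : ContDiff ℝ (⊤ : ℕ∞) (deriv f) := by
  exact (contDiff_infty_iff_deriv.1 h).2

lemma split_ode (σ : ℝ → ℝ → ℝ) (a b : ℝ → ℝ) (hab : ∀ x y, σ x y = a x + b y)
    (hb0 : b 0 = 0)
    (h1 : ∀ x y, pd1 (pd1 σ) x y + (-x/2) * σ x y = pd2 (pd2 σ) x y + (x/2) * σ x y) :
    (∀ x, deriv (deriv a) x = x * a x) ∧ ∀ y, b y = 0 := by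
  have hfun1 : ∀ y : ℝ, (fun t => σ t y) = fun t => a t + b y := fun y => funext fun t => hab t y
  have hfun2 : ∀ x : ℝ, (fun s => σ x s) = fun s => a x + b s := fun x => funext fun s => hab x s
  have hpd1 : ∀ x y, pd1 σ x y = deriv a x := by
    intro x y
    show deriv (fun t => σ t y) x = deriv a x
    rw [hfun1 y]
    exact deriv_add_const _
  have hpd11 : ∀ x y, pd1 (pd1 σ) x y = deriv (deriv a) x := by
    intro x y
    show deriv (fun t => pd1 σ t y) x = deriv (deriv a) x
    have e : (fun t => pd1 σ t y) = deriv a := funext fun t => hpd1 t y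
    rw [e]
  have hpd2 : ∀ x y, pd2 σ x y = deriv b y := by
    intro x y
    show deriv (fun s => σ x s) y = deriv b y
    rw [hfun2 x]
    exact deriv_const_add _
  have hpd22 : ∀ x y, pd2 (pd2 σ) x y = deriv (deriv b) y := by
    intro x y
    show deriv (fun s => pd2 σ x s) y = deriv (deriv b) y
    have e : (fun s => pd2 σ x s) = deriv b := funext fun s => hpd2 x s
    rw [e]
  have hE : ∀ x y, deriv (deriv a) x + (-x/2) * (a x + b y)
      = deriv (deriv b) y + (x/2) * (a x + b y) := by
    intro x y
    have h := h1 x y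
    rw [hpd11 x y, hpd22 x y, hab x y] at h
    exact h
  have hBconst : ∀ y, deriv (deriv b) y = deriv (deriv a) 0 := by
    intro y
    have h := hE 0 y
    norm_num at h
    linarith
  have hbconst : ∀ y, b y = 0 := by
    intro y
    have e1 := hE 1 y
    have e0 := hE 1 0
    rw [hBconst y] at e1
    rw [hBconst 0, hb0] at e0
    linarith
  refine ⟨?_, hbconst⟩
  intro x
  have hbfun : b = fun _ => (0:ℝ) := funext hbconst
  have e := hE x 0
  rw [hb0, hbfun] at e
  simp only [deriv_const'] at e
  linear_combination e

lemma converse (σ : ℝ → ℝ → ℝ) (hσ : ContDiff ℝ (⊤ : ℕ∞) (fun p : ℝ × ℝ => σ p.1 p.2))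
    (h1 : ∀ x y, pd1 (pd1 σ) x y + (-x/2) * σ x y = pd2 (pd2 σ) x y + (x/2) * σ x y)
    (h2 : ∀ x y, pd1 (pd2 σ) x y = 0) :
    ContDiff ℝ (⊤ : ℕ∞) (fun x => σ x 0) ∧ (∀ x, deriv (deriv (fun x => σ x 0)) x = x * σ x 0)
      ∧ ∀ x y, σ x y = σ x 0 := by
  have hdF : Differentiable ℝ (fun p : ℝ × ℝ => σ p.1 p.2) := hσ.differentiable (by simp)
  have hxs : ∀ y, ContDiff ℝ (⊤ : ℕ∞) (fun t => σ t y) := fun y =>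
    hσ.comp (contDiff_id.prodMk contDiff_const)
  have hys : ∀ x, ContDiff ℝ (⊤ : ℕ∞) (fun s => σ x s) := fun x =>
    hσ.comp (contDiff_const.prodMk contDiff_id)
  have hpd2F : ∀ t y : ℝ, pd2 σ t y
      = fderiv ℝ (fun p : ℝ × ℝ => σ p.1 p.2) (t, y) (0, 1) := by
    intro t y
    have hg : HasDerivAt (fun s : ℝ => ((t, s) : ℝ × ℝ)) ((0:ℝ), (1:ℝ)) y :=
      (hasDerivAt_const y t).prodMk (hasDerivAt_id y)
    have h := (hdF (t, y)).hasFDerivAt.comp_hasDerivAt y hg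
    exact h.deriv
  have hDsmooth : ContDiff ℝ (⊤ : ℕ∞)
      (fun p : ℝ × ℝ => fderiv ℝ (fun q : ℝ × ℝ => σ q.1 q.2) p (0, 1)) :=
    (hσ.fderiv_right (by simp)).clm_apply contDiff_const
  have hconstx : ∀ x y, pd2 σ x y = pd2 σ 0 y := by
    intro x y
    have heq : (fun t => pd2 σ t y)
        = fun t => fderiv ℝ (fun q : ℝ × ℝ => σ q.1 q.2) (t, y) (0,1) :=
      funext fun t => hpd2F t y
    have hdiff : Differentiable ℝ (fun t => pd2 σ t y) := by
      rw [heq]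
      exact (hDsmooth.comp (contDiff_id.prodMk contDiff_const)).differentiable (by simp)
    exact is_const_of_deriv_eq_zero hdiff (fun t => h2 t y) x 0
  have hab : ∀ x y, σ x y - σ 0 y = σ x 0 - σ 0 0 := by
    intro x y
    have hu : ∀ s : ℝ, HasDerivAt (fun s => σ x s - σ 0 s) (pd2 σ x s - pd2 σ 0 s) s := by
      intro s
      have ha' : HasDerivAt (fun s => σ x s) (pd2 σ x s) s :=
        ((hys x).differentiable (by simp) s).hasDerivAt
      have hb' : HasDerivAt (fun s => σ 0 s) (pd2 σ 0 s) s :=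
        ((hys 0).differentiable (by simp) s).hasDerivAt
      exact ha'.sub hb'
    have hdiff : Differentiable ℝ (fun s => σ x s - σ 0 s) := fun s => (hu s).differentiableAt
    have hz : ∀ s, deriv (fun s => σ x s - σ 0 s) s = 0 := by
      intro s
      rw [(hu s).deriv, hconstx x s]
      ring
    exact is_const_of_deriv_eq_zero hdiff hz y 0
  have hsplit := split_ode σ (fun x => σ x 0) (fun y => σ 0 y - σ 0 0)
      (fun x y => by have := hab x y; linarith) (by simp) h1
  refine ⟨hxs 0, hsplit.1, fun x y => ?_⟩
  have h := hab x y
  have hb := hsplit.2 y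
  linarith

end Stmt16Aux

open Stmt16Aux

/-- for the Möbius structure P₁₁ = -x/2, P₁₂ = 0, P₂₂ = x/2 on
ℝ², the solutions of the conformal-to-Einstein equation are exactly the
functions σ(x,y) = ξ(x) with ξ'' = xξ (Airy's equation); hence the solution
space is exactly 2-dimensional. -/
theorem stmt16
    (P11 P12 P22 : ℝ → ℝ → ℝ)
    (hP11 : P11 = fun x _ => -x / 2)
    (hP12 : P12 = fun _ _ => 0)
    (hP22 : P22 = fun x _ => x / 2) :
    (∀ ξ : ℝ → ℝ, ContDiff ℝ (⊤ : ℕ∞) ξ → (∀ x, deriv (deriv ξ) x = x * ξ x) →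
      ∀ x y : ℝ,
        pd1 (pd1 (fun s _ => ξ s)) x y + P11 x y * ξ x
          = pd2 (pd2 (fun s _ => ξ s)) x y + P22 x y * ξ x ∧
        pd1 (pd2 (fun s _ => ξ s)) x y + P12 x y * ξ x = 0) ∧
    (∀ σ : ℝ → ℝ → ℝ, ContDiff ℝ (⊤ : ℕ∞) (fun p : ℝ × ℝ => σ p.1 p.2) →
      (∀ x y : ℝ,
        pd1 (pd1 σ) x y + P11 x y * σ x y
          = pd2 (pd2 σ) x y + P22 x y * σ x y ∧
        pd1 (pd2 σ) x y + P12 x y * σ x y = 0) →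
      ∃ ξ : ℝ → ℝ, (∀ x, deriv (deriv ξ) x = x * ξ x) ∧ ∀ x y, σ x y = ξ x) ∧
    (∃ σ₁ σ₂ : ℝ → ℝ → ℝ,
      ContDiff ℝ (⊤ : ℕ∞) (fun p : ℝ × ℝ => σ₁ p.1 p.2) ∧
      ContDiff ℝ (⊤ : ℕ∞) (fun p : ℝ × ℝ => σ₂ p.1 p.2) ∧
      (∀ x y : ℝ,
        pd1 (pd1 σ₁) x y + P11 x y * σ₁ x y
          = pd2 (pd2 σ₁) x y + P22 x y * σ₁ x y ∧
        pd1 (pd2 σ₁) x y + P12 x y * σ₁ x y = 0) ∧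
      (∀ x y : ℝ,
        pd1 (pd1 σ₂) x y + P11 x y * σ₂ x y
          = pd2 (pd2 σ₂) x y + P22 x y * σ₂ x y ∧
        pd1 (pd2 σ₂) x y + P12 x y * σ₂ x y = 0) ∧
      (∀ c1 c2 : ℝ, (∀ x y, c1 * σ₁ x y + c2 * σ₂ x y = 0) → c1 = 0 ∧ c2 = 0) ∧
      (∀ σ : ℝ → ℝ → ℝ, ContDiff ℝ (⊤ : ℕ∞) (fun p : ℝ × ℝ => σ p.1 p.2) →
        (∀ x y : ℝ,
          pd1 (pd1 σ) x y + P11 x y * σ x y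
            = pd2 (pd2 σ) x y + P22 x y * σ x y ∧
          pd1 (pd2 σ) x y + P12 x y * σ x y = 0) →
        ∃ c1 c2 : ℝ, ∀ x y, σ x y = c1 * σ₁ x y + c2 * σ₂ x y)) := by
  subst hP11 hP12 hP22
  -- Part 1
  have part1 : ∀ ξ : ℝ → ℝ, ContDiff ℝ (⊤ : ℕ∞) ξ → (∀ x, deriv (deriv ξ) x = x * ξ x) →
      ∀ x y : ℝ,
        pd1 (pd1 (fun s _ => ξ s)) x y + (fun x (_ : ℝ) => -x / 2) x y * ξ x
          = pd2 (pd2 (fun s _ => ξ s)) x y + (fun x (_ : ℝ) => x / 2) x y * ξ x ∧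
        pd1 (pd2 (fun s _ => ξ s)) x y + (fun (_ _ : ℝ) => (0:ℝ)) x y * ξ x = 0 := by
    intro ξ hξ hair x y
    have e1 : pd1 (pd1 (fun s (_ : ℝ) => ξ s)) x y = deriv (deriv ξ) x := rfl
    have e2 : pd2 (pd2 (fun s (_ : ℝ) => ξ s)) x y = 0 := by
      have h : (fun t => pd2 (fun s (_ : ℝ) => ξ s) x t) = fun _ => (0:ℝ) :=
        funext fun t => deriv_const t (ξ x)
      show deriv (fun t => pd2 (fun s (_ : ℝ) => ξ s) x t) y = 0
      rw [h]
      exact deriv_const y 0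
    have e3 : pd1 (pd2 (fun s (_ : ℝ) => ξ s)) x y = 0 := by
      have h : (fun t => pd2 (fun s (_ : ℝ) => ξ s) t y) = fun _ => (0:ℝ) :=
        funext fun t => deriv_const y (ξ t)
      show deriv (fun t => pd2 (fun s (_ : ℝ) => ξ s) t y) x = 0
      rw [h]
      exact deriv_const x 0
    constructor
    · show pd1 (pd1 (fun s (_ : ℝ) => ξ s)) x y + (-x/2) * ξ x
        = pd2 (pd2 (fun s (_ : ℝ) => ξ s)) x y + (x/2) * ξ x
      rw [e1, e2, hair x]
      ring
    · show pd1 (pd2 (fun s (_ : ℝ) => ξ s)) x y + 0 * ξ x = 0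
      rw [e3]
      ring
  -- Part 2 via converse
  have part2 : ∀ σ : ℝ → ℝ → ℝ, ContDiff ℝ (⊤ : ℕ∞) (fun p : ℝ × ℝ => σ p.1 p.2) →
      (∀ x y : ℝ,
        pd1 (pd1 σ) x y + (fun x (_ : ℝ) => -x / 2) x y * σ x y
          = pd2 (pd2 σ) x y + (fun x (_ : ℝ) => x / 2) x y * σ x y ∧
        pd1 (pd2 σ) x y + (fun (_ _ : ℝ) => (0:ℝ)) x y * σ x y = 0) →
      ContDiff ℝ (⊤ : ℕ∞) (fun x => σ x 0) ∧ (∀ x, deriv (deriv (fun x => σ x 0)) x = x * σ x 0)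
        ∧ ∀ x y, σ x y = σ x 0 := by
    intro σ hσ hsol
    refine converse σ hσ (fun x y => ?_) (fun x y => ?_)
    · have h := (hsol x y).1
      show pd1 (pd1 σ) x y + (-x/2) * σ x y = pd2 (pd2 σ) x y + (x/2) * σ x y
      exact h
    · have h := (hsol x y).2
      have h' : pd1 (pd2 σ) x y + 0 * σ x y = 0 := h
      linarith [h']
  refine ⟨part1, fun σ hσ hsol => ⟨fun x => σ x 0, (part2 σ hσ hsol).2.1, (part2 σ hσ hsol).2.2⟩,
    ?_⟩
  -- Part 3
  refine ⟨fun x _ => af 1 0 x, fun x _ => af 0 1 x, ?_, ?_, ?_, ?_, ?_, ?_⟩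
  · exact (af_contDiff 1 0).comp contDiff_fst
  · exact (af_contDiff 0 1).comp contDiff_fst
  · exact part1 (af 1 0) (af_contDiff 1 0) (af_ode 1 0)
  · exact part1 (af 0 1) (af_contDiff 0 1) (af_ode 0 1)
  · -- linear independence
    intro c1 c2 hc
    have h0 : c1 * af 1 0 0 + c2 * af 0 1 0 = 0 := hc 0 0
    rw [af_zero, af_zero] at h0
    have hc1 : c1 = 0 := by linarith
    refine ⟨hc1, ?_⟩
    by_contra hc2
    have hzero : ∀ x, af 0 1 x = 0 := by
      intro x
      have h : c1 * af 1 0 x + c2 * af 0 1 x = 0 := hc x 0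
      rw [hc1] at h
      have : c2 * af 0 1 x = 0 := by linarith
      exact (mul_eq_zero.mp this).resolve_left hc2
    have hfun : af 0 1 = fun _ => (0:ℝ) := funext hzero
    have := af_deriv_zero 0 1
    rw [hfun] at this
    simp at this
  · -- spanning
    intro σ hσ hsol
    obtain ⟨hξs, hξode, hξconst⟩ := part2 σ hσ hsol
    set ξ : ℝ → ℝ := fun x => σ x 0 with hξ
    refine ⟨ξ 0, deriv ξ 0, fun x y => ?_⟩
    have hζs : ContDiff ℝ (⊤ : ℕ∞) (fun x => ξ x - (ξ 0 * af 1 0 x + deriv ξ 0 * af 0 1 x)) :=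
      hξs.sub ((contDiff_const.mul (af_contDiff 1 0)).add
        (contDiff_const.mul (af_contDiff 0 1)))
    have hg' : ∀ x, HasDerivAt (fun x => ξ 0 * af 1 0 x + deriv ξ 0 * af 0 1 x)
        (ξ 0 * deriv (af 1 0) x + deriv ξ 0 * deriv (af 0 1) x) x := fun x =>
      ((((af_contDiff 1 0).differentiable (by simp) x).hasDerivAt.const_mul (ξ 0)).add
        (((af_contDiff 0 1).differentiable (by simp) x).hasDerivAt.const_mul (deriv ξ 0)))
    have hζ' : ∀ x, HasDerivAt (fun x => ξ x - (ξ 0 * af 1 0 x + deriv ξ 0 * af 0 1 x))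
        (deriv ξ x - (ξ 0 * deriv (af 1 0) x + deriv ξ 0 * deriv (af 0 1) x)) x := fun x =>
      ((hξs.differentiable (by simp) x).hasDerivAt).sub (hg' x)
    have hζd : deriv (fun x => ξ x - (ξ 0 * af 1 0 x + deriv ξ 0 * af 0 1 x))
        = fun x => deriv ξ x - (ξ 0 * deriv (af 1 0) x + deriv ξ 0 * deriv (af 0 1) x) :=
      funext fun x => (hζ' x).deriv
    have hζ'' : ∀ x, HasDerivAt
        (fun x => deriv ξ x - (ξ 0 * deriv (af 1 0) x + deriv ξ 0 * deriv (af 0 1) x))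
        (deriv (deriv ξ) x
          - (ξ 0 * deriv (deriv (af 1 0)) x + deriv ξ 0 * deriv (deriv (af 0 1)) x)) x := by
      intro x
      have d1 : HasDerivAt (deriv ξ) (deriv (deriv ξ) x) x :=
        (((contDiff_deriv hξs).differentiable (by simp)) x).hasDerivAt
      have d2 : HasDerivAt (deriv (af 1 0)) (deriv (deriv (af 1 0)) x) x :=
        (((contDiff_deriv (af_contDiff 1 0)).differentiable (by simp)) x).hasDerivAt
      have d3 : HasDerivAt (deriv (af 0 1)) (deriv (deriv (af 0 1)) x) x :=
        (((contDiff_deriv (af_contDiff 0 1)).differentiable (by simp)) x).hasDerivAt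
      exact d1.sub ((d2.const_mul (ξ 0)).add (d3.const_mul (deriv ξ 0)))
    have hζode : ∀ x, deriv (deriv (fun x => ξ x - (ξ 0 * af 1 0 x + deriv ξ 0 * af 0 1 x))) x
        = x * (ξ x - (ξ 0 * af 1 0 x + deriv ξ 0 * af 0 1 x)) := by
      intro x
      rw [hζd, (hζ'' x).deriv, hξode x, af_ode 1 0 x, af_ode 0 1 x]
      show x * σ x 0 - (ξ 0 * (x * af 1 0 x) + deriv ξ 0 * (x * af 0 1 x)) = _
      rw [hξ]
      ring
    have hζ0 : (fun x => ξ x - (ξ 0 * af 1 0 x + deriv ξ 0 * af 0 1 x)) 0 = 0 := by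
      simp only [af_zero]
      ring
    have hζd0 : deriv (fun x => ξ x - (ξ 0 * af 1 0 x + deriv ξ 0 * af 0 1 x)) 0 = 0 := by
      rw [hζd]
      simp only [af_deriv_zero]
      ring
    have hz := airy_unique hζs hζode hζ0 hζd0 x
    have : ξ x = ξ 0 * af 1 0 x + deriv ξ 0 * af 0 1 x := by linarith [hz]
    calc σ x y = ξ x := hξconst x y
      _ = ξ 0 * af 1 0 x + deriv ξ 0 * af 0 1 x := this
end

section
/- Define K : ℝ² \ {0} → ℝ² by Kₐ = (1/(4x_cx^c))·((x_cx^c)² ε_{ab}x^b - 4xₐ). Then the tensor E_{ab} = ∂ₐK_b + KₐK_b + P_{ab} - (1/2)(∂_cK^c + K_cK^c)δ_{ab}, with P_{ab} = x_{(a}ε_{b)c}x^c, is not identically zero on ℝ² \ {0}; moreover ∂_{[a}K_{b]} ≠ 0, so K is not closed. -/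
/-!
On the `x`-axis the field is elementary: `K (x, 0) = (-1/x, -x³/4)`, with
`∂₁K₂ = -3x²/4` and `∂₂K₁ = x²/4` there (`K₁ = r²y/4 - x/r²`). Hence both the
off-diagonal component `E₁₂ = ∂₁K₂ + K₁K₂ + P₁₂` and the curl `∂₁K₂ - ∂₂K₁` equal
`-x²`, which is nonzero away from the origin.
-/

namespace MoebiusObstruction

noncomputable def K₁ : ℝ → ℝ → ℝ :=
  fun x y => ((x ^ 2 + y ^ 2) ^ 2 * y - 4 * x) / (4 * (x ^ 2 + y ^ 2))

noncomputable def K₂ : ℝ → ℝ → ℝ :=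
  fun x y => (-(x ^ 2 + y ^ 2) ^ 2 * x - 4 * y) / (4 * (x ^ 2 + y ^ 2))

noncomputable def P₁₂ : ℝ → ℝ → ℝ := fun x y => (y ^ 2 - x ^ 2) / 2

lemma K₁_axis {x : ℝ} (hx : x ≠ 0) : K₁ x 0 = -1 / x := by
  simp only [K₁]
  field_simp
  ring

lemma K₂_axis {x : ℝ} (hx : x ≠ 0) : K₂ x 0 = -x ^ 3 / 4 := by
  simp only [K₂]
  field_simp
  ring

lemma K₁_eq_of_ne {x : ℝ} (hx : x ≠ 0) (y : ℝ) :
    K₁ x y = (x ^ 2 + y ^ 2) * y / 4 - x / (x ^ 2 + y ^ 2) := by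
  have hr : x ^ 2 + y ^ 2 ≠ 0 := by positivity
  simp only [K₁]
  field_simp

lemma pd1_K₂_axis {x : ℝ} (hx : x ≠ 0) : pd1 K₂ x 0 = -3 * x ^ 2 / 4 := by
  have hcubic : (fun t => K₂ t 0) =ᶠ[nhds x] fun t => -t ^ 3 / 4 :=
    (eventually_ne_nhds hx).mono fun _ ht => K₂_axis ht
  have hderiv : HasDerivAt (fun t : ℝ => -t ^ 3 / 4) (-3 * x ^ 2 / 4) x :=
    ((hasDerivAt_pow 3 x).neg.div_const 4).congr_deriv (by ring)
  exact (hderiv.congr_of_eventuallyEq hcubic).deriv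

lemma pd2_K₁_axis {x : ℝ} (hx : x ≠ 0) : pd2 K₁ x 0 = x ^ 2 / 4 := by
  have hsq : HasDerivAt (fun t : ℝ => x ^ 2 + t ^ 2) 0 0 := by
    simpa using (hasDerivAt_pow 2 (0 : ℝ)).const_add (x ^ 2)
  have hderiv : HasDerivAt (fun t => (x ^ 2 + t ^ 2) * t / 4 - x / (x ^ 2 + t ^ 2))
      (x ^ 2 / 4) 0 :=
    (((hsq.mul (hasDerivAt_id 0)).div_const 4).sub
      ((hasDerivAt_const 0 x).div hsq (by positivity))).congr_deriv (by simp)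
  unfold pd2
  rw [show (fun t => K₁ x t) = _ from funext (K₁_eq_of_ne hx), hderiv.deriv]

lemma curl_K_axis {x : ℝ} (hx : x ≠ 0) : pd1 K₂ x 0 - pd2 K₁ x 0 = -x ^ 2 := by
  rw [pd1_K₂_axis hx, pd2_K₁_axis hx]
  ring

lemma obstruction₁₂_axis {x : ℝ} (hx : x ≠ 0) :
    pd1 K₂ x 0 + K₁ x 0 * K₂ x 0 + P₁₂ x 0 = -x ^ 2 := by
  rw [pd1_K₂_axis hx, K₁_axis hx, K₂_axis hx]
  simp only [P₁₂]
  field_simp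
  ring

end MoebiusObstruction

open MoebiusObstruction in
theorem stmt17_general
    (K1 K2 P11 P12 P22 : ℝ → ℝ → ℝ)
    (hK1 : K1 = fun x y => ((x ^ 2 + y ^ 2) ^ 2 * y - 4 * x) / (4 * (x ^ 2 + y ^ 2)))
    (hK2 : K2 = fun x y => (-(x ^ 2 + y ^ 2) ^ 2 * x - 4 * y) / (4 * (x ^ 2 + y ^ 2)))
    (hP12 : P12 = fun x y => (y ^ 2 - x ^ 2) / 2) :
    (¬ ∀ x y : ℝ, (x, y) ≠ (0, 0) →
      (pd1 K1 x y + K1 x y * K1 x y + P11 x y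
        - (1/2) * (pd1 K1 x y + pd2 K2 x y + K1 x y ^ 2 + K2 x y ^ 2) = 0 ∧
       pd1 K2 x y + K1 x y * K2 x y + P12 x y = 0 ∧
       pd2 K1 x y + K2 x y * K1 x y + P12 x y = 0 ∧
       pd2 K2 x y + K2 x y * K2 x y + P22 x y
        - (1/2) * (pd1 K1 x y + pd2 K2 x y + K1 x y ^ 2 + K2 x y ^ 2) = 0)) ∧
    (∃ x y : ℝ, (x, y) ≠ (0, 0) ∧ pd1 K2 x y - pd2 K1 x y ≠ 0) := by
  obtain rfl : K1 = K₁ := hK1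
  obtain rfl : K2 = K₂ := hK2
  obtain rfl : P12 = P₁₂ := hP12
  refine ⟨fun hE => ?_, ⟨1, 0, by simp, ?_⟩⟩
  · have hE₁₂ := (hE 1 0 (by simp)).2.1
    rw [obstruction₁₂_axis one_ne_zero] at hE₁₂
    norm_num at hE₁₂
  · rw [curl_K_axis one_ne_zero]
    norm_num

/-- for Kₐ = (1/(4x_cx^c))·((x_cx^c)²ε_{ab}x^b - 4xₐ) on
ℝ² \ {0}, i.e. K₁ = ((x²+y²)²y - 4x)/(4(x²+y²)), K₂ = (-(x²+y²)²x - 4y)/(4(x²+y²)),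
and P_{ab} = x_{(a}ε_{b)c}x^c (P₁₁ = xy, P₁₂ = (y²-x²)/2, P₂₂ = -xy), the
obstruction tensor E_{ab} is not identically zero on ℝ² \ {0}, and
∂_{[a}K_{b]} ≠ 0 (K is not closed). -/
theorem stmt17
    (K1 K2 P11 P12 P22 : ℝ → ℝ → ℝ)
    (hK1 : K1 = fun x y => ((x ^ 2 + y ^ 2) ^ 2 * y - 4 * x) / (4 * (x ^ 2 + y ^ 2)))
    (hK2 : K2 = fun x y => (-(x ^ 2 + y ^ 2) ^ 2 * x - 4 * y) / (4 * (x ^ 2 + y ^ 2)))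
    (hP11 : P11 = fun x y => x * y)
    (hP12 : P12 = fun x y => (y ^ 2 - x ^ 2) / 2)
    (hP22 : P22 = fun x y => -(x * y)) :
    (¬ ∀ x y : ℝ, (x, y) ≠ (0, 0) →
      (pd1 K1 x y + K1 x y * K1 x y + P11 x y
        - (1/2) * (pd1 K1 x y + pd2 K2 x y + K1 x y ^ 2 + K2 x y ^ 2) = 0 ∧
       pd1 K2 x y + K1 x y * K2 x y + P12 x y = 0 ∧
       pd2 K1 x y + K2 x y * K1 x y + P12 x y = 0 ∧
       pd2 K2 x y + K2 x y * K2 x y + P22 x y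
        - (1/2) * (pd1 K1 x y + pd2 K2 x y + K1 x y ^ 2 + K2 x y ^ 2) = 0)) ∧
    (∃ x y : ℝ, (x, y) ≠ (0, 0) ∧ pd1 K2 x y - pd2 K1 x y ≠ 0) :=
  stmt17_general K1 K2 P11 P12 P22 hK1 hK2 hP12
end
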